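/- arXiv:math/0512096 — 4 statements merged into one kernel-verified Lean document; each statement's English description precedes it below -/
import Mathlib

section
/- Let k1, k2, j be positive integers and let f, g be holomorphic functions on the upper half-plane Π. For every γ ∈ SL(2,ℝ) one has the covariance identity F_j(f|_{k1}γ, g|_{k2}γ) = (F_j(f,g))|_{k1+k2+2j}γ as functions on Π, where F_j is the Rankin–Cohen bracket attached to the weights (k1,k2). -/
open Complex Finset

/-- The weight-`k` slash action of `γ ∈ SL(2,ℝ)` on functions on the upper half-plane:
`(f ∣ₖ γ)(z) = (cz+d)^{-k} f((az+b)/(cz+d))`. -/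
noncomputable def slash (k : ℤ) (γ : Matrix.SpecialLinearGroup (Fin 2) ℝ) (f : ℂ → ℂ) :
    ℂ → ℂ :=
  fun z =>
    ((γ.1 1 0 : ℂ) * z + (γ.1 1 1 : ℂ)) ^ (-k) *
      f (((γ.1 0 0 : ℂ) * z + (γ.1 0 1 : ℂ)) / ((γ.1 1 0 : ℂ) * z + (γ.1 1 1 : ℂ)))

/-- The Rankin–Cohen bracket of weights `(k1, k2)` and order `j`:
`F_j(f,g) = Σ_{ℓ=0}^{j} (-1)^ℓ C(k1+j-1, ℓ) C(k2+j-1, j-ℓ) f^{(j-ℓ)} g^{(ℓ)}`. -/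
noncomputable def RCB (k1 k2 j : ℕ) (f g : ℂ → ℂ) : ℂ → ℂ :=
  fun z => ∑ ℓ ∈ Finset.range (j + 1),
    ((-1 : ℂ) ^ ℓ * (Nat.choose (k1 + j - 1) ℓ : ℂ) * (Nat.choose (k2 + j - 1) (j - ℓ) : ℂ)) *
      iteratedDeriv (j - ℓ) f z * iteratedDeriv ℓ g z

namespace RC
open scoped Nat

/-! ### Combinatorial coefficients -/

def Acoef (k n r : ℕ) : ℤ := (-1)^(n-r) * (n.choose r) * ((k+r).ascFactorial (n-r))

lemma Acoef_self (k n : ℕ) : Acoef k n n = 1 := by simp [Acoef]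

lemma Acoef_zero_of_lt (k n r : ℕ) (h : n < r) : Acoef k n r = 0 := by
  simp [Acoef, Nat.choose_eq_zero_of_lt h]

lemma Acoef_base (k n : ℕ) : Acoef k (n+1) 0 = -((k:ℤ)+n) * Acoef k n 0 := by
  simp [Acoef, Nat.ascFactorial_succ, pow_succ]
  ring

lemma Acoef_rec (k n r : ℕ) (hr : r ≤ n) :
    Acoef k (n+1) (r+1) = Acoef k n r - ((k:ℤ)+n+r+1) * Acoef k n (r+1) := by
  rcases eq_or_lt_of_le hr with rfl | hlt
  · rw [Acoef_self, Acoef_self, Acoef_zero_of_lt k r (r+1) (by omega)]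
    ring
  · obtain ⟨t, rfl⟩ : ∃ t, n = r + t + 1 := ⟨n - r - 1, by omega⟩
    have key : (r+t+1).choose (r+1) * (r+1) = (r+t+1).choose r * (t+1) := by
      rw [Nat.choose_succ_right_eq]
      congr 1
      omega
    have pascal : (r+t+2).choose (r+1) = (r+t+1).choose r + (r+t+1).choose (r+1) := by
      have := Nat.choose_succ_succ (r+t+1) r
      simpa [Nat.add_assoc] using this
    have asc1 : (k+r+1).ascFactorial (t+1) = (k+r+1+t) * (k+r+1).ascFactorial t :=
      Nat.ascFactorial_succ
    have asc2 : (k+r) * (k+r+1).ascFactorial t = (k+r+t) * (k+r).ascFactorial t :=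
      Nat.succ_ascFactorial (k+r) t
    have asc3 : (k+r).ascFactorial (t+1) = (k+r+t) * (k+r).ascFactorial t :=
      Nat.ascFactorial_succ
    unfold Acoef
    have e1 : r + t + 1 + 1 - (r+1) = t + 1 := by omega
    have e2 : r + t + 1 - r = t + 1 := by omega
    have e3 : r + t + 1 - (r + 1) = t := by omega
    rw [e1, e2, e3, show r+t+1+1 = r+t+2 from rfl, pascal]
    rw [show (k:ℕ)+(r+1) = k+r+1 from by omega, asc1]
    rw [asc3, ← asc2]
    have keyz : ((r+t+1).choose (r+1) : ℤ) * (r+1) = (r+t+1).choose r * (t+1) := by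
      exact_mod_cast key
    push_cast
    linear_combination ((-1:ℤ)^t * ((k+r+1).ascFactorial t : ℤ)) * keyz

lemma fact_ne (n : ℕ) : ((n ! : ℕ) : ℂ) ≠ 0 :=
  Nat.cast_ne_zero.mpr (Nat.factorial_ne_zero n)

lemma asc_cast (m t : ℕ) (hm : 0 < m) :
    ((m.ascFactorial t : ℕ) : ℂ) = ((m+t-1)! : ℂ) / ((m-1)! : ℂ) := by
  have h := Nat.factorial_mul_ascFactorial' m t hm
  rw [eq_div_iff (fact_ne _), mul_comm]
  exact_mod_cast congrArg (fun x : ℕ => (x : ℂ)) h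

lemma key_id (k1 k2 r s m p : ℕ) (hk1 : 0 < k1) (hk2 : 0 < k2) :
    (((k1+r+s+m+p-1).choose (s+m) : ℕ) : ℂ) * (((k2+r+s+m+p-1).choose (r+p) : ℕ) : ℂ)
      * (((r+p).choose r : ℕ) : ℂ) * (((k1+r).ascFactorial p : ℕ) : ℂ)
      * (((s+m).choose s : ℕ) : ℂ) * (((k2+s).ascFactorial m : ℕ) : ℂ)
      * ((r ! : ℕ) : ℂ) * ((s ! : ℕ) : ℂ) * (((k1+r-1)! : ℕ) : ℂ) * (((k2+s-1)! : ℕ) : ℂ)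
      * (((m+p)! : ℕ) : ℂ)
    = (((k1+r+s+m+p-1)! : ℕ) : ℂ) * (((k2+r+s+m+p-1)! : ℕ) : ℂ)
        * (((m+p).choose m : ℕ) : ℂ) := by
  rw [Nat.cast_choose ℂ (show s+m ≤ k1+r+s+m+p-1 by omega),
      Nat.cast_choose ℂ (show r+p ≤ k2+r+s+m+p-1 by omega),
      Nat.cast_choose ℂ (show r ≤ r+p by omega),
      Nat.cast_choose ℂ (show s ≤ s+m by omega),
      Nat.cast_choose ℂ (show m ≤ m+p by omega),
      asc_cast _ _ (show 0 < k1+r by omega),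
      asc_cast _ _ (show 0 < k2+s by omega)]
  have e1 : k1+r+s+m+p-1-(s+m) = k1+r+p-1 := by omega
  have e2 : k2+r+s+m+p-1-(r+p) = k2+s+m-1 := by omega
  have e3 : r+p-r = p := by omega
  have e4 : s+m-s = m := by omega
  have e5 : m+p-m = p := by omega
  rw [e1, e2, e3, e4, e5]
  generalize (((k1+r+s+m+p-1)! : ℕ) : ℂ) = A1
  generalize (((k2+r+s+m+p-1)! : ℕ) : ℂ) = A2
  have hB := fact_ne (s+m); generalize (((s+m)! : ℕ) : ℂ) = B at *
  have hC := fact_ne (k1+r+p-1); generalize (((k1+r+p-1)! : ℕ) : ℂ) = C at *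
  have hD := fact_ne (r+p); generalize (((r+p)! : ℕ) : ℂ) = D at *
  have hE := fact_ne (k2+s+m-1); generalize (((k2+s+m-1)! : ℕ) : ℂ) = E at *
  have hF := fact_ne r; generalize ((r ! : ℕ) : ℂ) = F at *
  have hG := fact_ne p; generalize ((p ! : ℕ) : ℂ) = G at *
  have hH := fact_ne s; generalize ((s ! : ℕ) : ℂ) = H at *
  have hI := fact_ne m; generalize ((m ! : ℕ) : ℂ) = I at *
  have hK := fact_ne (k1+r-1); generalize (((k1+r-1)! : ℕ) : ℂ) = K at *
  have hL := fact_ne (k2+s-1); generalize (((k2+s-1)! : ℕ) : ℂ) = L at *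
  have hM := fact_ne (m+p); generalize (((m+p)! : ℕ) : ℂ) = M at *
  have hBB : B * B⁻¹ = 1 := mul_inv_cancel₀ hB
  have hCC : C * C⁻¹ = 1 := mul_inv_cancel₀ hC
  have hDD : D * D⁻¹ = 1 := mul_inv_cancel₀ hD
  have hEE : E * E⁻¹ = 1 := mul_inv_cancel₀ hE
  have hFF : F * F⁻¹ = 1 := mul_inv_cancel₀ hF
  have hHH : H * H⁻¹ = 1 := mul_inv_cancel₀ hH
  have hKK : K * K⁻¹ = 1 := mul_inv_cancel₀ hK
  have hLL : L * L⁻¹ = 1 := mul_inv_cancel₀ hL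
  simp only [div_eq_mul_inv, mul_inv]
  linear_combination (A1*A2*M*G⁻¹*I⁻¹*C*C⁻¹*D*D⁻¹*E*E⁻¹*F*F⁻¹*H*H⁻¹*K*K⁻¹*L*L⁻¹) * hBB + (A1*A2*M*G⁻¹*I⁻¹*D*D⁻¹*E*E⁻¹*F*F⁻¹*H*H⁻¹*K*K⁻¹*L*L⁻¹) * hCC + (A1*A2*M*G⁻¹*I⁻¹*E*E⁻¹*F*F⁻¹*H*H⁻¹*K*K⁻¹*L*L⁻¹) * hDD + (A1*A2*M*G⁻¹*I⁻¹*F*F⁻¹*H*H⁻¹*K*K⁻¹*L*L⁻¹) * hEE + (A1*A2*M*G⁻¹*I⁻¹*H*H⁻¹*K*K⁻¹*L*L⁻¹) * hFF + (A1*A2*M*G⁻¹*I⁻¹*K*K⁻¹*L*L⁻¹) * hHH + (A1*A2*M*G⁻¹*I⁻¹*L*L⁻¹) * hKK + (A1*A2*M*G⁻¹*I⁻¹) * hLL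
lemma Svanish (k1 k2 j r s : ℕ) (hk1 : 0 < k1) (hk2 : 0 < k2) (hrs : r + s < j) :
    ∑ ℓ ∈ range (j+1), ((-1 : ℂ)^ℓ * ((k1+j-1).choose ℓ : ℂ) * ((k2+j-1).choose (j-ℓ) : ℂ)
      * (Acoef k1 (j-ℓ) r : ℂ) * (Acoef k2 ℓ s : ℂ)) = 0 := by
  set n' := j - r - s with hn'
  set D : ℂ := ((r ! : ℕ) : ℂ) * ((s ! : ℕ) : ℂ) * (((k1+r-1)! : ℕ) : ℂ)
      * (((k2+s-1)! : ℕ) : ℂ) * ((n' ! : ℕ) : ℂ) with hD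
  have hDne : D ≠ 0 := by
    refine mul_ne_zero (mul_ne_zero (mul_ne_zero (mul_ne_zero ?_ ?_) ?_) ?_) ?_ <;>
      exact fact_ne _
  suffices hSD : (∑ ℓ ∈ range (j+1), ((-1 : ℂ)^ℓ * ((k1+j-1).choose ℓ : ℂ)
      * ((k2+j-1).choose (j-ℓ) : ℂ)
      * (Acoef k1 (j-ℓ) r : ℂ) * (Acoef k2 ℓ s : ℂ))) * D = 0 by
    rcases mul_eq_zero.mp hSD with h | h
    · exact h
    · exact absurd h hDne
  rw [Finset.sum_mul]
  have hsub : Finset.Ico s (j-r+1) ⊆ Finset.range (j+1) := by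
    intro x hx
    simp only [Finset.mem_Ico, Finset.mem_range] at *
    omega
  have hout : ∀ ℓ ∈ Finset.range (j+1), ℓ ∉ Finset.Ico s (j-r+1) →
      ((-1 : ℂ)^ℓ * ((k1+j-1).choose ℓ : ℂ) * ((k2+j-1).choose (j-ℓ) : ℂ)
        * (Acoef k1 (j-ℓ) r : ℂ) * (Acoef k2 ℓ s : ℂ)) * D = 0 := by
    intro ℓ hℓ hnot
    simp only [Finset.mem_range] at hℓ
    simp only [Finset.mem_Ico, not_and_or, not_le, not_lt] at hnot
    rcases hnot with h | h
    · rw [Acoef_zero_of_lt k2 ℓ s h]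
      simp
    · rw [Acoef_zero_of_lt k1 (j-ℓ) r (by omega)]
      simp
  rw [← Finset.sum_subset hsub hout]
  rw [Finset.sum_Ico_eq_sum_range]
  rw [show j - r + 1 - s = n' + 1 by omega]
  have halt : ∑ i ∈ range (n'+1), ((-1:ℂ)^i * ((n').choose i : ℂ)) = 0 := by
    have h0 := Int.alternating_sum_range_choose_of_ne (show n' ≠ 0 by omega)
    have h2 : ((∑ i ∈ range (n'+1), ((-1)^i * ((n').choose i : ℤ)) : ℤ) : ℂ) = 0 := by
      rw [h0]; simp
    push_cast at h2
    exact h2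
  have perI : ∀ i ∈ range (n'+1),
      ((-1 : ℂ)^(s+i) * ((k1+j-1).choose (s+i) : ℂ) * ((k2+j-1).choose (j-(s+i)) : ℂ)
        * (Acoef k1 (j-(s+i)) r : ℂ) * (Acoef k2 (s+i) s : ℂ)) * D
      = ((-1:ℂ)^(s+n') * (((k1+j-1)! : ℕ) : ℂ) * (((k2+j-1)! : ℕ) : ℂ))
          * ((-1:ℂ)^i * ((n').choose i : ℂ)) := by
    intro i hi
    simp only [Finset.mem_range] at hi
    have hi' : i ≤ n' := by omega
    set p := n' - i with hp
    have hip : i + p = n' := by omega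
    have e1 : j - (s+i) = r + p := by omega
    have e2 : s + i - s = i := by omega
    have e3 : r + p - r = p := by omega
    have e4 : k1 + j - 1 = k1+r+s+i+p-1 := by omega
    have e5 : k2 + j - 1 = k2+r+s+i+p-1 := by omega
    rw [e1]
    simp only [Acoef, e2, e3]
    have kk := key_id k1 k2 r s i p hk1 hk2
    rw [hD, e4, e5, ← hip]
    push_cast
    push_cast at kk
    linear_combination ((-1:ℂ)^(s+i) * (-1:ℂ)^p * (-1:ℂ)^i) * kk
  rw [Finset.sum_congr rfl perI, ← Finset.mul_sum, halt, mul_zero]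


lemma Sgt (k1 k2 j r s : ℕ) (h : j < r + s) :
    ∑ ℓ ∈ range (j+1), ((-1 : ℂ)^ℓ * ((k1+j-1).choose ℓ : ℂ) * ((k2+j-1).choose (j-ℓ) : ℂ)
      * (Acoef k1 (j-ℓ) r : ℂ) * (Acoef k2 ℓ s : ℂ)) = 0 := by
  apply Finset.sum_eq_zero
  intro ℓ hℓ
  simp only [Finset.mem_range] at hℓ
  by_cases hs : s ≤ ℓ
  · rw [Acoef_zero_of_lt k1 (j-ℓ) r (by omega)]
    simp
  · rw [Acoef_zero_of_lt k2 ℓ s (by omega)]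
    simp

lemma Acoef_self' (k n : ℕ) : Acoef k n n = 1 := by simp [Acoef]

lemma Sdiag (k1 k2 j s : ℕ) (hs : s ≤ j) :
    ∑ ℓ ∈ range (j+1), ((-1 : ℂ)^ℓ * ((k1+j-1).choose ℓ : ℂ) * ((k2+j-1).choose (j-ℓ) : ℂ)
      * (Acoef k1 (j-ℓ) (j-s) : ℂ) * (Acoef k2 ℓ s : ℂ))
    = (-1 : ℂ)^s * ((k1+j-1).choose s : ℂ) * ((k2+j-1).choose (j-s) : ℂ) := by
  rw [Finset.sum_eq_single s]
  · rw [Acoef_self', Acoef_self']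
    push_cast
    ring
  · intro ℓ hℓ hne
    simp only [Finset.mem_range] at hℓ
    rcases lt_or_gt_of_ne hne with h | h
    · rw [Acoef_zero_of_lt k2 ℓ s h]
      simp
    · rw [Acoef_zero_of_lt k1 (j-ℓ) (j-s) (by omega)]
      simp
  · intro habs
    exact absurd (Finset.mem_range.mpr (by omega)) habs

/-! ### Geometry of the upper half-plane and the cocycle -/

def UU : Set ℂ := {z : ℂ | 0 < z.im}
lemma isOpen_UU : IsOpen UU := isOpen_lt continuous_const Complex.continuous_im

lemma iter_hasDerivAt {f : ℂ → ℂ} (hf : DifferentiableOn ℂ f UU) (r : ℕ) {x : ℂ}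
    (hx : x ∈ UU) : HasDerivAt (iteratedDeriv r f) (iteratedDeriv (r+1) f x) x := by
  have h := ((hf.analyticOnNhd isOpen_UU).iterated_deriv r) x hx
  rw [← iteratedDeriv_eq_iterate] at h
  have := h.differentiableAt.hasDerivAt
  rwa [show deriv (iteratedDeriv r f) x = iteratedDeriv (r+1) f x from by
    rw [iteratedDeriv_succ]] at this

variable (γ : Matrix.SpecialLinearGroup (Fin 2) ℝ)

noncomputable def Jf : ℂ → ℂ := fun z => (γ.1 1 0 : ℂ) * z + (γ.1 1 1 : ℂ)
noncomputable def wf : ℂ → ℂ := fun z => ((γ.1 0 0 : ℂ) * z + (γ.1 0 1 : ℂ)) / Jf γ z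

lemma det_nat : (γ.1 0 0 : ℝ) * γ.1 1 1 - γ.1 0 1 * γ.1 1 0 = 1 := by
  have h := γ.2
  rw [Matrix.det_fin_two] at h
  exact h

lemma det_c : (γ.1 0 0 : ℂ) * (γ.1 1 1 : ℂ) - (γ.1 0 1 : ℂ) * (γ.1 1 0 : ℂ) = 1 := by
  exact_mod_cast congrArg (fun x : ℝ => (x : ℂ)) (det_nat γ)

lemma Jf_im {z : ℂ} : (Jf γ z).im = (γ.1 1 0 : ℝ) * z.im := by
  simp [Jf]

lemma Jf_ne_zero {z : ℂ} (hz : 0 < z.im) : Jf γ z ≠ 0 := by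
  intro h
  by_cases hc : (γ.1 1 0 : ℝ) = 0
  · have hd : (γ.1 1 1 : ℝ) ≠ 0 := by
      intro hd
      have := det_nat γ
      rw [hc, hd] at this
      simp at this
    rw [Jf, hc] at h
    simp at h
    exact hd h
  · have : (Jf γ z).im ≠ 0 := by
      rw [Jf_im]
      exact mul_ne_zero hc hz.ne'
    exact this (by rw [h]; simp)

lemma wf_im {z : ℂ} (hz : 0 < z.im) : (wf γ z).im = z.im / Complex.normSq (Jf γ z) := by
  rw [wf, Complex.div_im]
  have h1 : ((γ.1 0 0 : ℂ) * z + (γ.1 0 1 : ℂ)).im = (γ.1 0 0 : ℝ) * z.im := by simp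
  have h2 : ((γ.1 0 0 : ℂ) * z + (γ.1 0 1 : ℂ)).re = (γ.1 0 0 : ℝ) * z.re + γ.1 0 1 := by simp
  have h3 : (Jf γ z).re = (γ.1 1 0 : ℝ) * z.re + γ.1 1 1 := by simp [Jf]
  rw [h1, h2, h3, Jf_im]
  rw [div_sub_div_same]
  congr 1
  have := det_nat γ
  nlinarith [this]

lemma wf_mem {z : ℂ} (hz : 0 < z.im) : 0 < (wf γ z).im := by
  rw [wf_im γ hz]
  exact div_pos hz (Complex.normSq_pos.mpr (Jf_ne_zero γ hz))

lemma hasDerivAt_Jf (z : ℂ) : HasDerivAt (Jf γ) (γ.1 1 0 : ℂ) z := by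
  exact (((hasDerivAt_id z).const_mul ((γ.1 1 0 : ℂ))).add_const (γ.1 1 1 : ℂ)).congr_deriv (mul_one _)

lemma hasDerivAt_wf {z : ℂ} (hz : 0 < z.im) :
    HasDerivAt (wf γ) ((Jf γ z) ^ (-2 : ℤ)) z := by
  have hN : HasDerivAt (fun x => (γ.1 0 0 : ℂ) * x + (γ.1 0 1 : ℂ)) (γ.1 0 0 : ℂ) z := by
    simpa using ((hasDerivAt_id z).const_mul ((γ.1 0 0 : ℂ))).add_const (γ.1 0 1 : ℂ)
  have hd := hN.div (hasDerivAt_Jf γ z) (Jf_ne_zero γ hz)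
  have hval : ((γ.1 0 0 : ℂ) * Jf γ z - ((γ.1 0 0 : ℂ) * z + (γ.1 0 1 : ℂ)) * (γ.1 1 0 : ℂ)) /
      (Jf γ z) ^ 2 = (Jf γ z) ^ (-2 : ℤ) := by
    have hA : ((γ.1 0 0 : ℂ) * Jf γ z - ((γ.1 0 0 : ℂ) * z + (γ.1 0 1 : ℂ)) * (γ.1 1 0 : ℂ)) = 1 := by
      simp only [Jf]
      linear_combination det_c γ
    rw [hA]
    simp [zpow_neg, zpow_two, sq, one_div]
  rw [← hval]
  exact hd

/-! ### The iterated derivative of a slashed function -/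

noncomputable def Xterm (k : ℕ) (f : ℂ → ℂ) (n r : ℕ) (z : ℂ) : ℂ :=
  (Acoef k n r : ℂ) * (γ.1 1 0 : ℂ)^(n-r) *
    ((Jf γ z) ^ (-((k:ℤ)+n+r)) * iteratedDeriv r f (wf γ z))

noncomputable def Yterm (k : ℕ) (f : ℂ → ℂ) (n r : ℕ) (z : ℂ) : ℂ :=
  (((k+n+r : ℕ)) : ℂ) * (Acoef k n r : ℂ) * (γ.1 1 0 : ℂ)^(n+1-r) *
    ((Jf γ z) ^ (-((k:ℤ)+(n+1)+r)) * iteratedDeriv r f (wf γ z))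

noncomputable def Qterm (k : ℕ) (f : ℂ → ℂ) (n r : ℕ) (z : ℂ) : ℂ :=
  (Acoef k n r : ℂ) * (γ.1 1 0 : ℂ)^(n-r) *
    ((Jf γ z) ^ (-((k:ℤ)+(n+1)+(r+1))) * iteratedDeriv (r+1) f (wf γ z))

theorem iter_slash (k : ℕ) (f : ℂ → ℂ) (hf : DifferentiableOn ℂ f UU) (n : ℕ) :
    Set.EqOn (iteratedDeriv n (slash k γ f))
      (fun z => ∑ r ∈ range (n+1), Xterm γ k f n r z) UU := by
  induction n with
  | zero =>
    intro z hz
    simp [Xterm, Acoef, slash, Jf, wf]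
  | succ n ih =>
    intro z hz
    have hz' : 0 < z.im := hz
    have hJ := Jf_ne_zero γ hz'
    rw [iteratedDeriv_succ]
    rw [Filter.EventuallyEq.deriv_eq
      (Filter.eventuallyEq_of_mem (isOpen_UU.mem_nhds hz) ih)]
    -- derivative of each term
    have hterm : ∀ r ∈ range (n+1), HasDerivAt (fun x => Xterm γ k f n r x)
        (-(Yterm γ k f n r z) + Qterm γ k f n r z) z := by
      intro r hr
      have hrn : r ≤ n := by
        have := mem_range.mp hr
        omega
      set e : ℤ := -((k:ℤ)+n+r) with he
      have hpow : HasDerivAt (fun x => (Jf γ x) ^ e)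
          ((e : ℂ) * (Jf γ z) ^ (e-1) * (γ.1 1 0 : ℂ)) z := by
        have h1 := hasDerivAt_zpow e (Jf γ z) (Or.inl hJ)
        have := h1.comp z (hasDerivAt_Jf γ z)
        exact this
      have hF : HasDerivAt (iteratedDeriv r f) (iteratedDeriv (r+1) f (wf γ z)) (wf γ z) :=
        iter_hasDerivAt hf r (wf_mem γ hz')
      have hcomp : HasDerivAt (fun x => iteratedDeriv r f (wf γ x))
          (iteratedDeriv (r+1) f (wf γ z) * (Jf γ z) ^ (-2 : ℤ)) z := by
        have := hF.comp z (hasDerivAt_wf γ hz')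
        exact this
      have hmul := (hpow.mul hcomp).const_mul ((Acoef k n r : ℂ) * (γ.1 1 0 : ℂ)^(n-r))
      have hfun : (fun x => ((Acoef k n r : ℂ) * (γ.1 1 0 : ℂ)^(n-r)) *
          ((Jf γ x) ^ e * iteratedDeriv r f (wf γ x))) = fun x => Xterm γ k f n r x := by
        funext x
        rw [Xterm, mul_assoc]
      change HasDerivAt (fun x => ((Acoef k n r : ℂ) * (γ.1 1 0 : ℂ)^(n-r)) *
          ((Jf γ x) ^ e * iteratedDeriv r f (wf γ x))) _ z at hmul
      rw [hfun] at hmul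
      convert hmul using 1
      -- value identity
      rw [Yterm, Qterm]
      have e1 : e - 1 = -((k:ℤ)+(n+1)+r) := by rw [he]; push_cast; ring
      have e2 : (Jf γ z) ^ e * ((Jf γ z) ^ (-2:ℤ)) = (Jf γ z) ^ (-((k:ℤ)+(n+1)+(r+1))) := by
        rw [← zpow_add₀ hJ]
        congr 1
        rw [he]; push_cast; ring
      have e3 : (γ.1 1 0 : ℂ)^(n+1-r) = (γ.1 1 0 : ℂ)^(n-r) * (γ.1 1 0 : ℂ) := by
        rw [← pow_succ]
        congr 1
        omega
      rw [e1, e3]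
      have he' : (e : ℂ) = -((k:ℂ)+n+r) := by rw [he]; push_cast; ring
      have hkn : (((k+n+r : ℕ)) : ℂ) = (k:ℂ)+n+r := by push_cast; ring
      rw [mul_add]
      congr 1
      · rw [he', hkn]; ring
      · rw [← e2]; ring
    have hsum := HasDerivAt.fun_sum hterm
    rw [hsum.deriv]
    -- now the algebraic re-summation
    have hXQ : ∀ r ∈ range (n+1),
        Xterm γ k f (n+1) (r+1) z = Qterm γ k f n r z - Yterm γ k f n (r+1) z := by
      intro r hr
      have hrn : r ≤ n := by
        have := mem_range.mp hr
        omega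
      rw [Xterm, Qterm, Yterm]
      have hA := Acoef_rec k n r hrn
      have e4 : -((k:ℤ)+(n+1:ℕ)+(r+1:ℕ)) = -((k:ℤ)+(n+1)+(r+1)) := by push_cast; ring
      have e5 : (n+1) - (r+1) = n - r := by omega
      have e6 : (n+1+1) - (r+1) = n + 1 - (r+1) + 1 := by omega
      rw [e4, e5]
      have hAc : ((Acoef k (n+1) (r+1) : ℤ) : ℂ)
          = (Acoef k n r : ℂ) - ((k:ℂ)+n+r+1) * (Acoef k n (r+1) : ℂ) := by
        rw [hA]; push_cast; ring
      rw [hAc]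
      have e7 : (((k+n+(r+1) : ℕ)) : ℂ) = (k:ℂ)+n+r+1 := by push_cast; ring
      rw [e7]
      push_cast
      ring
    have hX0 : Xterm γ k f (n+1) 0 z = -(Yterm γ k f n 0 z) := by
      rw [Xterm, Yterm]
      have : ((Acoef k (n+1) 0 : ℤ) : ℂ) = -((k:ℂ)+n) * (Acoef k n 0 : ℂ) := by
        rw [Acoef_base]; push_cast; ring
      rw [this]
      have : (((k+n+0 : ℕ)) : ℂ) = (k:ℂ)+n := by push_cast; ring
      rw [this]
      have e9 : -((k:ℤ)+(n+1:ℕ)+(0:ℕ)) = -((k:ℤ)+(n+1)+0) := by push_cast; ring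
      rw [e9]
      ring
    have hYtop : Yterm γ k f n (n+1) z = 0 := by
      rw [Yterm, Acoef_zero_of_lt k n (n+1) (by omega)]
      simp
    calc ∑ r ∈ range (n+1), (-(Yterm γ k f n r z) + Qterm γ k f n r z)
        = -(∑ r ∈ range (n+1), Yterm γ k f n r z)
            + ∑ r ∈ range (n+1), Qterm γ k f n r z := by
          rw [Finset.sum_add_distrib, Finset.sum_neg_distrib]
      _ = ∑ r ∈ range (n+2), Xterm γ k f (n+1) r z := by
          rw [Finset.sum_range_succ' (fun r => Xterm γ k f (n+1) r z) (n+1)]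
          rw [Finset.sum_congr rfl hXQ, hX0]
          rw [Finset.sum_sub_distrib]
          have : ∑ r ∈ range (n+1), Yterm γ k f n (r+1) z
              = ∑ r ∈ range (n+1), Yterm γ k f n r z
                - Yterm γ k f n 0 z + Yterm γ k f n (n+1) z := by
            rw [Finset.sum_range_succ' (fun r => Yterm γ k f n r z) n] at *
            rw [Finset.sum_range_succ (fun r => Yterm γ k f n (r+1) z) n]
            ring
          rw [this, hYtop]
          ring

end RC

/-- Covariance of the Rankin–Cohen bracket:
`F_j(f|_{k1}γ, g|_{k2}γ) = (F_j(f,g))|_{k1+k2+2j}γ` on the upper half-plane. -/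
theorem rankinCohen_covariance (k1 k2 j : ℕ) (hk1 : 0 < k1) (hk2 : 0 < k2) (hj : 0 < j)
    (f g : ℂ → ℂ)
    (hf : DifferentiableOn ℂ f {z : ℂ | 0 < z.im})
    (hg : DifferentiableOn ℂ g {z : ℂ | 0 < z.im})
    (γ : Matrix.SpecialLinearGroup (Fin 2) ℝ) :
    ∀ z : ℂ, 0 < z.im →
      RCB k1 k2 j (slash k1 γ f) (slash k2 γ g) z
        = slash (k1 + k2 + 2 * j) γ (RCB k1 k2 j f g) z := by
  intro z hz
  have hz' : z ∈ RC.UU := hz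
  have hJ := RC.Jf_ne_zero γ hz
  have hFz : ∀ n, iteratedDeriv n (slash k1 γ f) z
      = ∑ r ∈ Finset.range (n+1), RC.Xterm γ k1 f n r z :=
    fun n => RC.iter_slash γ k1 f hf n hz'
  have hGz : ∀ n, iteratedDeriv n (slash k2 γ g) z
      = ∑ r ∈ Finset.range (n+1), RC.Xterm γ k2 g n r z :=
    fun n => RC.iter_slash γ k2 g hg n hz'
  -- the generic summand of the triple sum
  set c : ℂ := (γ.1 1 0 : ℂ) with hc
  set w : ℂ := RC.wf γ z with hw
  set J : ℂ := RC.Jf γ z with hJdef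
  have stepA : RCB k1 k2 j (slash k1 γ f) (slash k2 γ g) z
      = ∑ ℓ ∈ range (j+1), ∑ r ∈ range (j+1), ∑ s ∈ range (j+1),
          ((-1 : ℂ) ^ ℓ * ((k1 + j - 1).choose ℓ : ℂ) * ((k2 + j - 1).choose (j - ℓ) : ℂ)) *
            (RC.Xterm γ k1 f (j-ℓ) r z * RC.Xterm γ k2 g ℓ s z) := by
    rw [RCB]
    refine Finset.sum_congr rfl fun ℓ hℓ => ?_
    simp only [Finset.mem_range] at hℓ
    rw [hFz (j-ℓ), hGz ℓ]
    rw [show (∑ r ∈ Finset.range (j-ℓ+1), RC.Xterm γ k1 f (j-ℓ) r z)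
        = ∑ r ∈ Finset.range (j+1), RC.Xterm γ k1 f (j-ℓ) r z from
      Finset.sum_subset (Finset.range_subset_range.mpr (by omega)) (fun x hx hnx => by
        simp only [Finset.mem_range] at hx hnx
        rw [RC.Xterm, RC.Acoef_zero_of_lt k1 (j-ℓ) x (by omega)]
        simp)]
    rw [show (∑ r ∈ Finset.range (ℓ+1), RC.Xterm γ k2 g ℓ r z)
        = ∑ r ∈ Finset.range (j+1), RC.Xterm γ k2 g ℓ r z from
      Finset.sum_subset (Finset.range_subset_range.mpr (by omega)) (fun x hx hnx => by
        simp only [Finset.mem_range] at hx hnx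
        rw [RC.Xterm, RC.Acoef_zero_of_lt k2 ℓ x (by omega)]
        simp)]
    rw [mul_assoc, Finset.sum_mul_sum]
    simp only [Finset.mul_sum]
  rw [stepA]
  rw [Finset.sum_comm]
  have swap2 : ∀ r ∈ range (j+1),
      (∑ ℓ ∈ range (j+1), ∑ s ∈ range (j+1),
        ((-1 : ℂ) ^ ℓ * ((k1 + j - 1).choose ℓ : ℂ) * ((k2 + j - 1).choose (j - ℓ) : ℂ)) *
          (RC.Xterm γ k1 f (j-ℓ) r z * RC.Xterm γ k2 g ℓ s z))
      = ∑ s ∈ range (j+1), ∑ ℓ ∈ range (j+1),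
        ((-1 : ℂ) ^ ℓ * ((k1 + j - 1).choose ℓ : ℂ) * ((k2 + j - 1).choose (j - ℓ) : ℂ)) *
          (RC.Xterm γ k1 f (j-ℓ) r z * RC.Xterm γ k2 g ℓ s z) :=
    fun r _ => Finset.sum_comm
  rw [Finset.sum_congr rfl swap2, Finset.sum_comm]
  -- now the sum is over s, then r, then ℓ
  have hfact : ∀ s ∈ range (j+1), ∀ r ∈ range (j+1),
      (∑ ℓ ∈ range (j+1),
        ((-1 : ℂ) ^ ℓ * ((k1 + j - 1).choose ℓ : ℂ) * ((k2 + j - 1).choose (j - ℓ) : ℂ)) *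
          (RC.Xterm γ k1 f (j-ℓ) r z * RC.Xterm γ k2 g ℓ s z))
      = (∑ ℓ ∈ range (j+1), ((-1 : ℂ)^ℓ * ((k1+j-1).choose ℓ : ℂ)
            * ((k2+j-1).choose (j-ℓ) : ℂ)
            * (RC.Acoef k1 (j-ℓ) r : ℂ) * (RC.Acoef k2 ℓ s : ℂ)))
          * (c^(j-r-s) * (J ^ (-((k1:ℤ)+k2+j+r+s))
              * (iteratedDeriv r f w * iteratedDeriv s g w))) := by
    intro s hs r hr
    simp only [Finset.mem_range] at hs hr
    rw [Finset.sum_mul]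
    refine Finset.sum_congr rfl fun ℓ hℓ => ?_
    simp only [Finset.mem_range] at hℓ
    by_cases hcase : r ≤ j - ℓ ∧ s ≤ ℓ
    · obtain ⟨hr', hs'⟩ := hcase
      have hcpow : c ^ (j-r-s) = c^(j-ℓ-r) * c^(ℓ-s) := by
        rw [← pow_add]; congr 1; omega
      have hJpow : (J : ℂ) ^ (-((k1:ℤ)+k2+j+r+s))
          = J ^ (-((k1:ℤ) + ((j-ℓ : ℕ) : ℤ) + r)) * J ^ (-((k2:ℤ) + ℓ + s)) := by
        rw [← zpow_add₀ hJ]; congr 1; push_cast [Nat.cast_sub (show ℓ ≤ j by omega)]; ring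
      simp only [RC.Xterm]
      simp only [← hJdef, ← hw, ← hc]
      rw [hcpow, hJpow]
      ring
    · rw [not_and_or] at hcase
      rcases hcase with h | h
      · simp only [RC.Xterm]
        rw [RC.Acoef_zero_of_lt k1 (j-ℓ) r (by omega)]
        simp
      · simp only [RC.Xterm]
        rw [RC.Acoef_zero_of_lt k2 ℓ s (by omega)]
        simp
  rw [Finset.sum_congr rfl (fun s hs => Finset.sum_congr rfl (hfact s hs))]
  -- collapse the r-sum to r = j - s
  have hcollapse : ∀ s ∈ range (j+1),
      (∑ r ∈ range (j+1),
        (∑ ℓ ∈ range (j+1), ((-1 : ℂ)^ℓ * ((k1+j-1).choose ℓ : ℂ)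
            * ((k2+j-1).choose (j-ℓ) : ℂ)
            * (RC.Acoef k1 (j-ℓ) r : ℂ) * (RC.Acoef k2 ℓ s : ℂ)))
          * (c^(j-r-s) * (J ^ (-((k1:ℤ)+k2+j+r+s))
              * (iteratedDeriv r f w * iteratedDeriv s g w))))
      = ((-1 : ℂ)^s * ((k1+j-1).choose s : ℂ) * ((k2+j-1).choose (j-s) : ℂ))
          * (J ^ (-((k1:ℤ)+k2+2*j))
              * (iteratedDeriv (j-s) f w * iteratedDeriv s g w)) := by
    intro s hs
    simp only [Finset.mem_range] at hs
    rw [Finset.sum_eq_single (j-s)]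
    · rw [RC.Sdiag k1 k2 j s (by omega)]
      rw [show j - (j-s) - s = 0 from by omega]
      rw [show (-((k1:ℤ)+k2+j+(j-s : ℕ)+s)) = -((k1:ℤ)+k2+2*j) from by
        push_cast [Nat.cast_sub (by omega : s ≤ j)]; ring]
      rw [pow_zero]
      ring
    · intro r hr hne
      simp only [Finset.mem_range] at hr
      rcases lt_trichotomy (r + s) j with h | h | h
      · rw [RC.Svanish k1 k2 j r s hk1 hk2 h, zero_mul]
      · exact absurd (by omega : r = j - s) hne
      · rw [RC.Sgt k1 k2 j r s h, zero_mul]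
    · intro habs
      exact absurd (Finset.mem_range.mpr (by omega)) habs
  rw [Finset.sum_congr rfl hcollapse]
  -- the right-hand side
  rw [slash, RCB]
  rw [show ((γ.1 1 0 : ℂ) * z + (γ.1 1 1 : ℂ)) = J from rfl]
  rw [show (((γ.1 0 0 : ℂ) * z + (γ.1 0 1 : ℂ)) / J) = w from rfl]
  rw [Finset.mul_sum]
  refine Finset.sum_congr rfl fun s hs => ?_
  rw [show (-((k1 : ℤ) + (k2:ℤ) + 2 * (j:ℤ))) = -((k1:ℤ)+k2+2*j) from by ring]
  ring
end

section
/- Let k1, k2, j be positive integers, let Γ be a subgroup of SL(2,ℝ), and let f, g be holomorphic functions on the upper half-plane Π that are modular of weight k1 and k2 respectively for Γ (i.e. f|_{k1}γ = f and g|_{k2}γ = g for all γ ∈ Γ). Then F_j(f,g) satisfies F_j(f,g)|_{k1+k2+2j}γ = F_j(f,g) for all γ ∈ Γ, i.e. the Rankin–Cohen bracket F_j(f,g) is modular of weight k1+k2+2j for Γ. -/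
open Complex Finset

lemma factC_ne (n : ℕ) : ((n.factorial : ℂ)) ≠ 0 := Nat.cast_ne_zero.2 n.factorial_ne_zero

noncomputable def Ac (k n r : ℕ) : ℂ :=
  if r ≤ n then (n.factorial : ℂ) * ((k+n).factorial : ℂ) /
    ((r.factorial : ℂ) * ((n-r).factorial : ℂ) * ((k+r).factorial : ℂ)) else 0

lemma Ac_self (k n : ℕ) : Ac k n n = 1 := by
  rw [Ac, if_pos le_rfl, Nat.sub_self]
  field_simp [factC_ne]
  simp [Nat.factorial_ne_zero]

lemma Ac_of_lt (k n r : ℕ) (h : n < r) : Ac k n r = 0 := by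
  simp [Ac, Nat.not_le.mpr h]

lemma Ac_succ_zero (k n : ℕ) : Ac k (n+1) 0 = ((k+n+1 : ℕ) : ℂ) * Ac k n 0 := by
  simp only [Ac, if_pos (Nat.zero_le _), Nat.sub_zero]
  have f1 : ((n+1).factorial : ℂ) = (n+1) * n.factorial := by
    rw [Nat.factorial_succ]; push_cast; ring
  have h2 : k + (n+1) = (k+n) + 1 := by omega
  have f2 : ((k+(n+1)).factorial : ℂ) = ((k+n:ℕ) + 1) * (k+n).factorial := by
    rw [h2, Nat.factorial_succ]; push_cast; ring
  rw [f1, f2]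
  field_simp [factC_ne]
  push_cast
  ring

lemma Ac_succ_succ (k n r : ℕ) (hr : r ≤ n) :
    Ac k (n+1) (r+1) = ((k+n+r+2 : ℕ) : ℂ) * Ac k n (r+1) + Ac k n r := by
  rcases Nat.lt_or_ge r n with h | h
  · obtain ⟨m, rfl⟩ : ∃ m, n = r + 1 + m := ⟨n - (r+1), by omega⟩
    simp only [Ac, if_pos (by omega : r + 1 ≤ r + 1 + m + 1),
      if_pos (by omega : r + 1 ≤ r + 1 + m), if_pos (by omega : r ≤ r + 1 + m)]
    have e1 : r + 1 + m + 1 - (r + 1) = m + 1 := by omega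
    have e2 : r + 1 + m - (r + 1) = m := by omega
    have e3 : r + 1 + m - r = m + 1 := by omega
    rw [e1, e2, e3]
    have f1 : ((r+1+m+1).factorial : ℂ) = ((r+1+m:ℕ)+1) * (r+1+m).factorial := by
      rw [Nat.factorial_succ]; push_cast; ring
    have e4 : k + (r+1+m+1) = (k+(r+1+m)) + 1 := by omega
    have f2 : ((k+(r+1+m+1)).factorial : ℂ) = ((k+(r+1+m):ℕ)+1) * (k+(r+1+m)).factorial := by
      rw [e4, Nat.factorial_succ]; push_cast; ring
    have f3 : ((m+1).factorial : ℂ) = ((m:ℕ)+1) * m.factorial := by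
      rw [Nat.factorial_succ]; push_cast; ring
    have f4 : ((r+1).factorial : ℂ) = ((r:ℕ)+1) * r.factorial := by
      rw [Nat.factorial_succ]; push_cast; ring
    have e5 : k + (r+1) = (k+r) + 1 := by omega
    have f5 : ((k+(r+1)).factorial : ℂ) = ((k+r:ℕ)+1) * (k+r).factorial := by
      rw [e5, Nat.factorial_succ]; push_cast; ring
    rw [f1, f2, f3, f4, f5]
    have hne : ((k+r:ℕ):ℂ) + 1 ≠ 0 := Nat.cast_add_one_ne_zero _
    field_simp [factC_ne, Nat.cast_add_one_ne_zero, hne]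
    push_cast
    ring
  · have : r = n := by omega
    subst this
    rw [Ac_self, Ac_of_lt k r (r+1) (by omega), Ac_self]
    simp

lemma tri1 (j r ℓ : ℕ) (hℓ : ℓ ≤ j) :
    j.choose ℓ * (j-ℓ).choose r = j.choose r * (j-r).choose ℓ := by
  rcases le_or_gt r (j - ℓ) with h | h
  · have h1 : j.choose ℓ = j.choose (j - ℓ) := (Nat.choose_symm hℓ).symm
    rw [h1, Nat.choose_mul h]
    congr 1
    have e : j - ℓ - r = (j - r) - ℓ := by omega
    rw [e, Nat.choose_symm (by omega)]
  · by_cases hr : r ≤ j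
    · rw [Nat.choose_eq_zero_of_lt h, Nat.choose_eq_zero_of_lt (show j - r < ℓ by omega)]
      simp
    · rw [Nat.choose_eq_zero_of_lt h, Nat.choose_eq_zero_of_lt (show j < r by omega)]
      simp

lemma tri2 (q s i : ℕ) : q.choose (s+i) * (s+i).choose s = q.choose s * (q - s).choose i := by
  rcases le_or_gt (s+i) q with h | h
  · have := Nat.choose_mul (n := q) (Nat.le_add_right s i)
    rw [this]
    have e : s + i - s = i := by omega
    rw [e]
  · by_cases hs : s ≤ q
    · rw [Nat.choose_eq_zero_of_lt h, Nat.choose_eq_zero_of_lt (show q - s < i by omega)]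
      simp
    · rw [Nat.choose_eq_zero_of_lt h, Nat.choose_eq_zero_of_lt (show q < s by omega)]
      simp

lemma alt_aux (m : ℕ) (hm : m ≠ 0) :
    ∑ i ∈ range (m+1), (-1:ℂ)^i * (m.choose i : ℂ) = 0 := by
  have h := Int.alternating_sum_range_choose (n := m)
  rw [if_neg hm] at h
  have := congrArg (fun x : ℤ => (x : ℂ)) h
  push_cast at this
  simpa using this

lemma alt_sum (j r s : ℕ) (hrs : r + s < j) :
    ∑ ℓ ∈ range (j+1), (-1:ℂ)^ℓ * ((j.choose ℓ * (j-ℓ).choose r * ℓ.choose s : ℕ) : ℂ) = 0 := by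
  set q := j - r with hq
  have hsq : s ≤ q := by omega
  have hstep : ∀ ℓ ∈ range (j+1),
      (-1:ℂ)^ℓ * ((j.choose ℓ * (j-ℓ).choose r * ℓ.choose s : ℕ) : ℂ)
      = (j.choose r : ℂ) * ((-1:ℂ)^ℓ * ((q.choose ℓ * ℓ.choose s : ℕ) : ℂ)) := by
    intro ℓ hℓ
    rw [mem_range] at hℓ
    have := tri1 j r ℓ (by omega)
    have e : (j.choose ℓ * (j-ℓ).choose r * ℓ.choose s : ℕ)
        = j.choose r * (q.choose ℓ * ℓ.choose s) := by
      rw [← Nat.mul_assoc, this, hq]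
      try ring
    rw [e]
    push_cast
    try ring
  rw [Finset.sum_congr rfl hstep, ← Finset.mul_sum]
  have main : ∑ ℓ ∈ range (j+1), (-1:ℂ)^ℓ * ((q.choose ℓ * ℓ.choose s : ℕ) : ℂ) = 0 := by
    -- split at s
    have hsplit : range (j+1) = Finset.Ico 0 (j+1) := by rw [Finset.range_eq_Ico]
    rw [hsplit, ← Finset.sum_Ico_consecutive _ (Nat.zero_le s) (by omega : s ≤ j+1)]
    have h1 : ∑ ℓ ∈ Finset.Ico 0 s, (-1:ℂ)^ℓ * ((q.choose ℓ * ℓ.choose s : ℕ) : ℂ) = 0 := by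
      apply Finset.sum_eq_zero
      intro ℓ hℓ
      rw [Finset.mem_Ico] at hℓ
      rw [Nat.choose_eq_zero_of_lt hℓ.2]
      simp
    rw [h1, zero_add, Finset.sum_Ico_eq_sum_range]
    have h2 : ∀ i ∈ range (j+1-s),
        (-1:ℂ)^(s+i) * ((q.choose (s+i) * (s+i).choose s : ℕ) : ℂ)
        = ((-1:ℂ)^s * (q.choose s : ℂ)) * ((-1:ℂ)^i * ((q-s).choose i : ℂ)) := by
      intro i _
      rw [tri2]
      push_cast
      rw [pow_add]
      ring
    rw [Finset.sum_congr rfl h2, ← Finset.mul_sum]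
    have h3 : ∑ i ∈ range (j+1-s), (-1:ℂ)^i * (((q-s).choose i : ℕ) : ℂ) = 0 := by
      have hsub : range ((q-s)+1) ⊆ range (j+1-s) := by
        apply Finset.range_subset_range.2; omega
      rw [← Finset.sum_subset hsub]
      · exact alt_aux (q-s) (by omega)
      · intro i hi hni
        rw [mem_range] at hi hni
        rw [Nat.choose_eq_zero_of_lt (by omega)]
        simp
    rw [h3, mul_zero]
  rw [main, mul_zero]

lemma helper (p F1 F2 w x1 v x2 t1 t2 t3 u1 u2 u3 q : ℂ)
    (hw : w ≠ 0) (hx1 : x1 ≠ 0) (hv : v ≠ 0) (hx2 : x2 ≠ 0) (ht1 : t1 ≠ 0)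
    (ht2 : t2 ≠ 0) (ht3 : t3 ≠ 0) (hu1 : u1 ≠ 0) (hu2 : u2 ≠ 0) (hu3 : u3 ≠ 0)
    (hq : q ≠ 0) :
    p * (F1 / (w * x1)) * (F2 / (v * x2)) * ((v * x1) / (t1 * t2 * t3))
      * ((w * x2) / (u1 * u2 * u3))
    = (F1 * F2 / (q * t3 * u3)) * (p * (q / (w * v) * (v / (t1 * t2)) * (w / (u1 * u2)))) := by
  have hne : ∀ x y : ℂ, x ≠ 0 → y ≠ 0 → x * y ≠ 0 := fun x y hx hy => mul_ne_zero hx hy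
  simp only [mul_div_assoc', div_mul_eq_mul_div, div_div]
  rw [div_eq_div_iff] <;> [ring; skip; skip] <;>
    solve | (repeat' apply mul_ne_zero) <;> assumption

set_option maxHeartbeats 1000000 in
lemma comb (k1 k2 j r s : ℕ) :
    ∑ ℓ ∈ range (j+1), (((-1:ℂ)^ℓ * ((k1+j).choose ℓ : ℂ) * ((k2+j).choose (j-ℓ) : ℂ))
      * Ac k1 (j-ℓ) r * Ac k2 ℓ s)
    = if r + s = j then (-1:ℂ)^s * ((k1+j).choose s : ℂ) * ((k2+j).choose (j-s) : ℂ) else 0 := by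
  rcases lt_trichotomy (r+s) j with hlt | heq | hgt
  · -- hard case
    rw [if_neg (by omega)]
    have hterm : ∀ ℓ ∈ range (j+1),
        (((-1:ℂ)^ℓ * ((k1+j).choose ℓ : ℂ) * ((k2+j).choose (j-ℓ) : ℂ))
          * Ac k1 (j-ℓ) r * Ac k2 ℓ s)
        = (((k1+j).factorial : ℂ) * ((k2+j).factorial : ℂ) /
            ((j.factorial : ℂ) * ((k1+r).factorial : ℂ) * ((k2+s).factorial : ℂ)))
          * ((-1:ℂ)^ℓ * ((j.choose ℓ * (j-ℓ).choose r * ℓ.choose s : ℕ) : ℂ)) := by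
      intro ℓ hℓ
      rw [mem_range] at hℓ
      have hℓj : ℓ ≤ j := by omega
      by_cases h1 : r ≤ j - ℓ
      · by_cases h2 : s ≤ ℓ
        · rw [Ac, if_pos h1, Ac, if_pos h2, Nat.cast_mul, Nat.cast_mul]
          rw [Nat.cast_choose ℂ (show ℓ ≤ k1+j by omega),
              Nat.cast_choose ℂ (show j-ℓ ≤ k2+j by omega),
              Nat.cast_choose ℂ (show ℓ ≤ j from hℓj),
              Nat.cast_choose ℂ (show r ≤ j-ℓ from h1),
              Nat.cast_choose ℂ (show s ≤ ℓ from h2)]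
          have e1 : k1 + j - ℓ = k1 + (j - ℓ) := by omega
          have e2 : k2 + j - (j - ℓ) = k2 + ℓ := by omega
          rw [e1, e2]
          exact helper _ _ _ _ _ _ _ _ _ _ _ _ _ _ (factC_ne _) (factC_ne _) (factC_ne _)
            (factC_ne _) (factC_ne _) (factC_ne _) (factC_ne _) (factC_ne _) (factC_ne _)
            (factC_ne _) (factC_ne _)
        · rw [Ac_of_lt k2 ℓ s (by omega), Nat.choose_eq_zero_of_lt (by omega : ℓ < s)]
          simp
      · rw [Ac_of_lt k1 (j-ℓ) r (by omega), Nat.choose_eq_zero_of_lt (by omega : j - ℓ < r)]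
        simp
    rw [Finset.sum_congr rfl hterm, ← Finset.mul_sum, alt_sum j r s hlt, mul_zero]
  · rw [if_pos heq]
    rw [Finset.sum_eq_single s]
    · have e : j - s = r := by omega
      rw [e, Ac_self, Ac_self]
      ring
    · intro ℓ hℓ hne
      rw [mem_range] at hℓ
      rcases Nat.lt_or_ge ℓ s with h | h
      · rw [Ac_of_lt k2 ℓ s h]; ring
      · rw [Ac_of_lt k1 (j-ℓ) r (by omega)]; ring
    · intro h
      exact absurd (mem_range.2 (by omega)) h
  · rw [if_neg (by omega)]
    apply Finset.sum_eq_zero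
    intro ℓ hℓ
    rw [mem_range] at hℓ
    by_cases h1 : r ≤ j - ℓ
    · rw [Ac_of_lt k2 ℓ s (by omega)]; ring
    · rw [Ac_of_lt k1 (j-ℓ) r (by omega)]; ring

lemma sum_step (N : ℕ) (U V T : ℕ → ℂ) (hU0 : T 0 = U 0)
    (hstep : ∀ r, r ≤ N → T (r+1) = U (r+1) + V r) (hUtop : U (N+1) = 0) :
    (∑ r ∈ range (N+1), U r) + (∑ r ∈ range (N+1), V r) = ∑ r ∈ range (N+2), T r := by
  rw [Finset.sum_range_succ' T (N+1), Finset.sum_range_succ' U N]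
  have h1 : ∑ r ∈ range (N+1), T (r+1) = ∑ r ∈ range (N+1), (U (r+1) + V r) :=
    Finset.sum_congr rfl (fun r hr => hstep r (Nat.lt_succ_iff.mp (mem_range.mp hr)))
  rw [h1, Finset.sum_add_distrib, hU0]
  have h2 : ∑ r ∈ range (N+1), U (r+1) = (∑ r ∈ range N, U (r+1)) + U (N+1) :=
    Finset.sum_range_succ _ N
  rw [h2, hUtop]
  ring

lemma key_transform (a b c d : ℂ) (hdet : a*d - b*c = 1)
    (hden : ∀ z : ℂ, 0 < z.im → c*z+d ≠ 0)
    (hmem : ∀ z : ℂ, 0 < z.im → 0 < (((a*z+b)/(c*z+d)) : ℂ).im)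
    (k : ℕ) (f : ℂ → ℂ) (hf : DifferentiableOn ℂ f {z : ℂ | 0 < z.im})
    (hmod : ∀ z : ℂ, 0 < z.im → f ((a*z+b)/(c*z+d)) = (c*z+d)^(k+1) * f z) :
    ∀ n : ℕ, ∀ z : ℂ, 0 < z.im → iteratedDeriv n f ((a*z+b)/(c*z+d)) =
      ∑ r ∈ range (n+1), Ac k n r * c^(n-r) * (c*z+d)^(k+1+n+r) * iteratedDeriv r f z := by
  have hopen : IsOpen {z : ℂ | 0 < z.im} := isOpen_lt continuous_const Complex.continuous_im
  have hanal : ∀ m : ℕ, AnalyticOnNhd ℂ (iteratedDeriv m f) {z : ℂ | 0 < z.im} := by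
    intro m
    induction m with
    | zero => simpa [iteratedDeriv_zero] using hf.analyticOnNhd hopen
    | succ m ih => rw [iteratedDeriv_succ]; exact ih.deriv
  have hdiff : ∀ (m : ℕ) (z : ℂ), 0 < z.im →
      HasDerivAt (iteratedDeriv m f) (iteratedDeriv (m+1) f z) z := by
    intro m z hz
    have h := ((hanal m) z hz).differentiableAt.hasDerivAt
    rwa [← iteratedDeriv_succ] at h
  have hlin : ∀ z : ℂ, HasDerivAt (fun z : ℂ => c*z+d) c z := by
    intro z
    simpa using ((hasDerivAt_id z).const_mul c).add_const d
  have hw : ∀ z : ℂ, 0 < z.im →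
      HasDerivAt (fun z : ℂ => (a*z+b)/(c*z+d)) (((c*z+d)^2)⁻¹) z := by
    intro z hz
    have h1 : HasDerivAt (fun z : ℂ => a*z+b) a z := by
      simpa using ((hasDerivAt_id z).const_mul a).add_const b
    have h2 := h1.fun_div (hlin z) (hden z hz)
    refine h2.congr_deriv (Eq.symm ?_)
    rw [inv_eq_one_div]
    congr 1
    linear_combination -hdet
  intro n
  induction n with
  | zero =>
    intro z hz
    rw [Finset.sum_range_one, iteratedDeriv_zero, Ac_self]
    simpa using hmod z hz
  | succ n ih =>
    intro z hz
    have hJ : (c*z+d) ≠ 0 := hden z hz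
    have hL : HasDerivAt (fun z : ℂ => iteratedDeriv n f ((a*z+b)/(c*z+d)))
        (iteratedDeriv (n+1) f ((a*z+b)/(c*z+d)) * ((c*z+d)^2)⁻¹) z :=
      by have := (hdiff n ((a*z+b)/(c*z+d)) (hmem z hz)).comp z (hw z hz); exact this
    have hR : HasDerivAt
        (fun z : ℂ => ∑ r ∈ range (n+1),
          Ac k n r * c^(n-r) * (c*z+d)^(k+1+n+r) * iteratedDeriv r f z)
        (∑ r ∈ range (n+1), (Ac k n r * c^(n-r) *
          (((k+1+n+r : ℕ) : ℂ) * (c*z+d)^(k+n+r) * c * iteratedDeriv r f z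
            + (c*z+d)^(k+1+n+r) * iteratedDeriv (r+1) f z))) z := by
      apply HasDerivAt.fun_sum
      intro r hr
      have hpow : HasDerivAt (fun z : ℂ => (c*z+d)^(k+1+n+r))
          (((k+1+n+r : ℕ) : ℂ) * (c*z+d)^(k+n+r) * c) z := by
        have h := (hlin z).pow (k+1+n+r)
        have e : k+1+n+r-1 = k+n+r := by omega
        rwa [e] at h
      have hmul := (hpow.mul (hdiff r z hz)).const_mul (Ac k n r * c^(n-r))
      have goalfn : (fun z : ℂ => Ac k n r * c^(n-r) * (c*z+d)^(k+1+n+r) * iteratedDeriv r f z)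
          = fun z : ℂ => (Ac k n r * c^(n-r)) * ((c*z+d)^(k+1+n+r) * iteratedDeriv r f z) := by
        funext x; ring
      rw [goalfn]
      exact hmul
    have hev : (fun z : ℂ => iteratedDeriv n f ((a*z+b)/(c*z+d)))
        =ᶠ[nhds z] (fun z : ℂ => ∑ r ∈ range (n+1),
          Ac k n r * c^(n-r) * (c*z+d)^(k+1+n+r) * iteratedDeriv r f z) := by
      filter_upwards [hopen.mem_nhds hz] with x hx using ih x hx
    have heq : iteratedDeriv (n+1) f ((a*z+b)/(c*z+d)) * ((c*z+d)^2)⁻¹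
        = ∑ r ∈ range (n+1), (Ac k n r * c^(n-r) *
          (((k+1+n+r : ℕ) : ℂ) * (c*z+d)^(k+n+r) * c * iteratedDeriv r f z
            + (c*z+d)^(k+1+n+r) * iteratedDeriv (r+1) f z)) :=
      (hL.congr_of_eventuallyEq hev.symm).unique hR
    have hsolve : iteratedDeriv (n+1) f ((a*z+b)/(c*z+d))
        = (∑ r ∈ range (n+1), (Ac k n r * c^(n-r) *
          (((k+1+n+r : ℕ) : ℂ) * (c*z+d)^(k+n+r) * c * iteratedDeriv r f z
            + (c*z+d)^(k+1+n+r) * iteratedDeriv (r+1) f z))) * (c*z+d)^2 := by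
      rw [← heq, mul_assoc, inv_mul_cancel₀ (pow_ne_zero 2 hJ), mul_one]
    rw [hsolve, Finset.sum_mul]
    have hsplit : ∀ r ∈ range (n+1),
        (Ac k n r * c^(n-r) *
          (((k+1+n+r : ℕ) : ℂ) * (c*z+d)^(k+n+r) * c * iteratedDeriv r f z
            + (c*z+d)^(k+1+n+r) * iteratedDeriv (r+1) f z)) * (c*z+d)^2
        = (((k+1+n+r : ℕ) : ℂ) * Ac k n r * c^(n-r+1) * (c*z+d)^(k+n+r+2) * iteratedDeriv r f z
          + Ac k n r * c^(n-r) * (c*z+d)^(k+n+r+3) * iteratedDeriv (r+1) f z) := by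
      intro r hr
      have e : k+1+n+r = k+n+r+1 := by omega
      rw [e]
      ring
    rw [Finset.sum_congr rfl hsplit, Finset.sum_add_distrib]
    apply sum_step n
      (U := fun r => ((k+1+n+r : ℕ) : ℂ) * Ac k n r * c^(n-r+1) * (c*z+d)^(k+n+r+2) * iteratedDeriv r f z)
      (V := fun r => Ac k n r * c^(n-r) * (c*z+d)^(k+n+r+3) * iteratedDeriv (r+1) f z)
    · -- T 0 = U 0
      have e1 : n+1-0 = n-0+1 := by omega
      have e2 : k+1+(n+1)+0 = k+n+0+2 := by omega
      have e3 : (k+1+n+0 : ℕ) = (k+n+1 : ℕ) := by omega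
      rw [Ac_succ_zero, e1, e2, e3]
      try ring
    · -- step
      intro r hr
      have ec : (k+1+n+(r+1) : ℕ) = (k+n+r+2 : ℕ) := by omega
      have eJ1 : k+1+(n+1)+(r+1) = k+n+r+3 := by omega
      have eJ2 : k+n+(r+1)+2 = k+n+r+3 := by omega
      rcases Nat.lt_or_ge r n with hlt | hge
      · have eC1 : n+1-(r+1) = n-r := by omega
        have eC2 : n-(r+1)+1 = n-r := by omega
        rw [Ac_succ_succ k n r hr, ec, eJ1, eJ2, eC1, eC2]
        ring
      · have hrn : r = n := by omega
        subst hrn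
        rw [Ac_succ_succ k r r le_rfl, Ac_of_lt k r (r+1) (by omega), ec, eJ1, eJ2]
        have eC1 : r+1-(r+1) = r-r := by omega
        rw [eC1]
        ring
    · -- U (n+1) = 0
      rw [Ac_of_lt k n (n+1) (by omega)]
      ring

set_option maxHeartbeats 1000000 in
lemma RCB_transform (a b c d : ℂ) (hdet : a*d - b*c = 1)
    (hden : ∀ z : ℂ, 0 < z.im → c*z+d ≠ 0)
    (hmem : ∀ z : ℂ, 0 < z.im → 0 < (((a*z+b)/(c*z+d)) : ℂ).im)
    (k1' k2' j : ℕ) (f g : ℂ → ℂ)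
    (hf : DifferentiableOn ℂ f {z : ℂ | 0 < z.im})
    (hg : DifferentiableOn ℂ g {z : ℂ | 0 < z.im})
    (hmod1 : ∀ z : ℂ, 0 < z.im → f ((a*z+b)/(c*z+d)) = (c*z+d)^(k1'+1) * f z)
    (hmod2 : ∀ z : ℂ, 0 < z.im → g ((a*z+b)/(c*z+d)) = (c*z+d)^(k2'+1) * g z)
    (z : ℂ) (hz : 0 < z.im) :
    RCB (k1'+1) (k2'+1) j f g ((a*z+b)/(c*z+d))
      = (c*z+d)^((k1'+1)+(k2'+1)+2*j) * RCB (k1'+1) (k2'+1) j f g z := by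
  have hkey1 := key_transform a b c d hdet hden hmem k1' f hf hmod1
  have hkey2 := key_transform a b c d hdet hden hmem k2' g hg hmod2
  simp only [RCB]
  have ee1 : k1'+1+j-1 = k1'+j := by omega
  have ee2 : k2'+1+j-1 = k2'+j := by omega
  rw [ee1, ee2]
  -- step 1: expand each iterated derivative at the transformed point
  have step1 : ∀ ℓ ∈ range (j+1),
      ((-1:ℂ)^ℓ * ((k1'+j).choose ℓ : ℂ) * ((k2'+j).choose (j-ℓ) : ℂ)) *
        iteratedDeriv (j-ℓ) f ((a*z+b)/(c*z+d)) * iteratedDeriv ℓ g ((a*z+b)/(c*z+d))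
      = ∑ r ∈ range (j+1), ∑ s ∈ range (j+1),
          ((-1:ℂ)^ℓ * ((k1'+j).choose ℓ : ℂ) * ((k2'+j).choose (j-ℓ) : ℂ))
          * ((Ac k1' (j-ℓ) r * c^(j-ℓ-r) * (c*z+d)^(k1'+1+(j-ℓ)+r) * iteratedDeriv r f z)
            * (Ac k2' ℓ s * c^(ℓ-s) * (c*z+d)^(k2'+1+ℓ+s) * iteratedDeriv s g z)) := by
    intro ℓ hℓ
    rw [mem_range] at hℓ
    rw [hkey1 (j-ℓ) z hz, hkey2 ℓ z hz]
    have ext1 : (∑ r ∈ range ((j-ℓ)+1), Ac k1' (j-ℓ) r * c^(j-ℓ-r) * (c*z+d)^(k1'+1+(j-ℓ)+r) * iteratedDeriv r f z)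
        = ∑ r ∈ range (j+1), Ac k1' (j-ℓ) r * c^(j-ℓ-r) * (c*z+d)^(k1'+1+(j-ℓ)+r) * iteratedDeriv r f z := by
      apply Finset.sum_subset (Finset.range_subset_range.2 (by omega))
      intro x hx hnx
      rw [mem_range, Nat.not_lt] at hnx
      rw [Ac_of_lt k1' (j-ℓ) x (by omega)]
      ring
    have ext2 : (∑ s ∈ range (ℓ+1), Ac k2' ℓ s * c^(ℓ-s) * (c*z+d)^(k2'+1+ℓ+s) * iteratedDeriv s g z)
        = ∑ s ∈ range (j+1), Ac k2' ℓ s * c^(ℓ-s) * (c*z+d)^(k2'+1+ℓ+s) * iteratedDeriv s g z := by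
      apply Finset.sum_subset (Finset.range_subset_range.2 (by omega))
      intro x hx hnx
      rw [mem_range, Nat.not_lt] at hnx
      rw [Ac_of_lt k2' ℓ x (by omega)]
      ring
    rw [ext1, ext2, mul_assoc, Finset.sum_mul_sum, Finset.mul_sum]
    apply Finset.sum_congr rfl
    intro r hr
    rw [Finset.mul_sum]
  rw [Finset.sum_congr rfl step1]
  -- step 2: swap sums to put ℓ innermost
  rw [Finset.sum_comm]
  have swap2 : ∀ r ∈ range (j+1),
      (∑ ℓ ∈ range (j+1), ∑ s ∈ range (j+1),
        ((-1:ℂ)^ℓ * ((k1'+j).choose ℓ : ℂ) * ((k2'+j).choose (j-ℓ) : ℂ))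
        * ((Ac k1' (j-ℓ) r * c^(j-ℓ-r) * (c*z+d)^(k1'+1+(j-ℓ)+r) * iteratedDeriv r f z)
          * (Ac k2' ℓ s * c^(ℓ-s) * (c*z+d)^(k2'+1+ℓ+s) * iteratedDeriv s g z)))
      = ∑ s ∈ range (j+1), ∑ ℓ ∈ range (j+1),
        ((-1:ℂ)^ℓ * ((k1'+j).choose ℓ : ℂ) * ((k2'+j).choose (j-ℓ) : ℂ))
        * ((Ac k1' (j-ℓ) r * c^(j-ℓ-r) * (c*z+d)^(k1'+1+(j-ℓ)+r) * iteratedDeriv r f z)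
          * (Ac k2' ℓ s * c^(ℓ-s) * (c*z+d)^(k2'+1+ℓ+s) * iteratedDeriv s g z)) :=
    fun r _ => Finset.sum_comm
  rw [Finset.sum_congr rfl swap2]
  -- step 3: factor the ℓ-sum
  have step3 : ∀ r ∈ range (j+1), ∀ s ∈ range (j+1),
      (∑ ℓ ∈ range (j+1),
        ((-1:ℂ)^ℓ * ((k1'+j).choose ℓ : ℂ) * ((k2'+j).choose (j-ℓ) : ℂ))
        * ((Ac k1' (j-ℓ) r * c^(j-ℓ-r) * (c*z+d)^(k1'+1+(j-ℓ)+r) * iteratedDeriv r f z)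
          * (Ac k2' ℓ s * c^(ℓ-s) * (c*z+d)^(k2'+1+ℓ+s) * iteratedDeriv s g z)))
      = (∑ ℓ ∈ range (j+1),
          ((-1:ℂ)^ℓ * ((k1'+j).choose ℓ : ℂ) * ((k2'+j).choose (j-ℓ) : ℂ))
            * Ac k1' (j-ℓ) r * Ac k2' ℓ s)
        * (c^(j-r-s) * (c*z+d)^((k1'+1)+(k2'+1)+j+r+s) * iteratedDeriv r f z * iteratedDeriv s g z) := by
    intro r hr s hs
    rw [Finset.sum_mul]
    apply Finset.sum_congr rfl
    intro ℓ hℓ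
    rw [mem_range] at hℓ
    by_cases h1 : r ≤ j - ℓ
    · by_cases h2 : s ≤ ℓ
      · have hc : c^(j-ℓ-r) * c^(ℓ-s) = c^(j-r-s) := by
          rw [← pow_add]; congr 1; omega
        have hJm : (c*z+d)^(k1'+1+(j-ℓ)+r) * (c*z+d)^(k2'+1+ℓ+s)
            = (c*z+d)^((k1'+1)+(k2'+1)+j+r+s) := by
          rw [← pow_add]; congr 1; omega
        calc ((-1:ℂ)^ℓ * ((k1'+j).choose ℓ : ℂ) * ((k2'+j).choose (j-ℓ) : ℂ))
            * ((Ac k1' (j-ℓ) r * c^(j-ℓ-r) * (c*z+d)^(k1'+1+(j-ℓ)+r) * iteratedDeriv r f z)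
              * (Ac k2' ℓ s * c^(ℓ-s) * (c*z+d)^(k2'+1+ℓ+s) * iteratedDeriv s g z))
            = (((-1:ℂ)^ℓ * ((k1'+j).choose ℓ : ℂ) * ((k2'+j).choose (j-ℓ) : ℂ))
                * Ac k1' (j-ℓ) r * Ac k2' ℓ s)
              * ((c^(j-ℓ-r) * c^(ℓ-s)) * ((c*z+d)^(k1'+1+(j-ℓ)+r) * (c*z+d)^(k2'+1+ℓ+s))
                * iteratedDeriv r f z * iteratedDeriv s g z) := by ring
          _ = _ := by rw [hc, hJm]
      · rw [Ac_of_lt k2' ℓ s (by omega)]; ring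
    · rw [Ac_of_lt k1' (j-ℓ) r (by omega)]; ring
  rw [Finset.sum_comm]
  rw [Finset.sum_congr rfl (fun s hs => Finset.sum_congr rfl (fun r hr => step3 r hr s hs))]
  -- step 4: apply comb
  have step4 : ∀ s ∈ range (j+1), ∀ r ∈ range (j+1),
      (∑ ℓ ∈ range (j+1),
          ((-1:ℂ)^ℓ * ((k1'+j).choose ℓ : ℂ) * ((k2'+j).choose (j-ℓ) : ℂ))
            * Ac k1' (j-ℓ) r * Ac k2' ℓ s)
        * (c^(j-r-s) * (c*z+d)^((k1'+1)+(k2'+1)+j+r+s) * iteratedDeriv r f z * iteratedDeriv s g z)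
      = if r = j - s then
          ((-1:ℂ)^s * ((k1'+j).choose s : ℂ) * ((k2'+j).choose (j-s) : ℂ))
            * ((c*z+d)^((k1'+1)+(k2'+1)+2*j) * iteratedDeriv (j-s) f z * iteratedDeriv s g z)
        else
          (if r + s = j then ((-1:ℂ)^s * ((k1'+j).choose s : ℂ) * ((k2'+j).choose (j-s) : ℂ)) else 0)
            * (c^(j-r-s) * (c*z+d)^((k1'+1)+(k2'+1)+j+r+s) * iteratedDeriv r f z * iteratedDeriv s g z) := by
    intro s hs r hr
    rw [mem_range] at hs hr
    rw [comb k1' k2' j r s]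
    by_cases hrs : r = j - s
    · rw [if_pos hrs]
      have hj : r + s = j := by omega
      rw [if_pos hj]
      subst hrs
      have e0 : j - (j-s) - s = 0 := by omega
      have eJ : (k1'+1)+(k2'+1)+j+(j-s)+s = (k1'+1)+(k2'+1)+2*j := by omega
      rw [e0, eJ, pow_zero]
      ring
    · rw [if_neg hrs]
  rw [Finset.sum_congr rfl (fun s hs => Finset.sum_congr rfl (fun r hr => step4 s hs r hr))]
  -- step 5: evaluate the r-sum
  have step5 : ∀ s ∈ range (j+1),
      (∑ r ∈ range (j+1),
        if r = j - s then
          ((-1:ℂ)^s * ((k1'+j).choose s : ℂ) * ((k2'+j).choose (j-s) : ℂ))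
            * ((c*z+d)^((k1'+1)+(k2'+1)+2*j) * iteratedDeriv (j-s) f z * iteratedDeriv s g z)
        else
          (if r + s = j then ((-1:ℂ)^s * ((k1'+j).choose s : ℂ) * ((k2'+j).choose (j-s) : ℂ)) else 0)
            * (c^(j-r-s) * (c*z+d)^((k1'+1)+(k2'+1)+j+r+s) * iteratedDeriv r f z * iteratedDeriv s g z))
      = (c*z+d)^((k1'+1)+(k2'+1)+2*j) *
          (((-1:ℂ)^s * ((k1'+j).choose s : ℂ) * ((k2'+j).choose (j-s) : ℂ))
            * iteratedDeriv (j-s) f z * iteratedDeriv s g z) := by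
    intro s hs
    rw [mem_range] at hs
    have hs' : s ≤ j := by omega
    have heval : ∀ r ∈ range (j+1), r ≠ j - s →
        ((if r = j - s then
          ((-1:ℂ)^s * ((k1'+j).choose s : ℂ) * ((k2'+j).choose (j-s) : ℂ))
            * ((c*z+d)^((k1'+1)+(k2'+1)+2*j) * iteratedDeriv (j-s) f z * iteratedDeriv s g z)
        else
          (if r + s = j then ((-1:ℂ)^s * ((k1'+j).choose s : ℂ) * ((k2'+j).choose (j-s) : ℂ)) else 0)
            * (c^(j-r-s) * (c*z+d)^((k1'+1)+(k2'+1)+j+r+s) * iteratedDeriv r f z * iteratedDeriv s g z))) = 0 := by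
      intro r hrr hne
      rw [if_neg hne, if_neg (by omega), zero_mul]
    rw [Finset.sum_eq_single (j-s) (fun r hrr hne => heval r hrr hne)
      (fun hns => absurd (mem_range.2 (by omega)) hns)]
    rw [if_pos rfl]
    ring
  rw [Finset.sum_congr rfl step5, ← Finset.mul_sum]

lemma denom_ne (a b c d : ℝ) (hdet : a*d - b*c = 1) (z : ℂ) (hz : 0 < z.im) :
    (c:ℂ)*z + (d:ℂ) ≠ 0 := by
  intro h
  have him : c * z.im = 0 := by
    have := congrArg Complex.im h
    simpa [Complex.add_im, Complex.mul_im] using this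
  have hc : c = 0 := by
    rcases mul_eq_zero.1 him with h' | h'
    · exact h'
    · exact absurd h' (ne_of_gt hz)
  have hre : c * z.re + d = 0 := by
    have := congrArg Complex.re h
    simpa [Complex.add_re, Complex.mul_re] using this
  have hd : d = 0 := by rw [hc] at hre; simpa using hre
  rw [hc, hd] at hdet
  simp at hdet

lemma im_pos (a b c d : ℝ) (hdet : a*d - b*c = 1) (z : ℂ) (hz : 0 < z.im) :
    0 < (((a:ℂ)*z+(b:ℂ))/((c:ℂ)*z+(d:ℂ))).im := by
  have hne := denom_ne a b c d hdet z hz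
  rw [Complex.div_im, div_sub_div_same]
  apply div_pos
  · have hcalc : ((a:ℂ)*z+(b:ℂ)).im * ((c:ℂ)*z+(d:ℂ)).re
        - ((a:ℂ)*z+(b:ℂ)).re * ((c:ℂ)*z+(d:ℂ)).im = z.im := by
      simp only [Complex.add_im, Complex.add_re, Complex.mul_im, Complex.mul_re,
        Complex.ofReal_re, Complex.ofReal_im]
      nlinarith [hdet]
    rw [hcalc]
    exact hz
  · exact Complex.normSq_pos.mpr hne


/-- If `f`, `g` are holomorphic on the upper half-plane and modular of weights `k1`, `k2`
for a subgroup `Γ ⊆ SL(2,ℝ)`, then `F_j(f,g)` is modular of weight `k1 + k2 + 2j` for `Γ`. -/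
theorem rankinCohen_modular (k1 k2 j : ℕ) (hk1 : 0 < k1) (hk2 : 0 < k2) (hj : 0 < j)
    (Γ : Subgroup (Matrix.SpecialLinearGroup (Fin 2) ℝ))
    (f g : ℂ → ℂ)
    (hf : DifferentiableOn ℂ f {z : ℂ | 0 < z.im})
    (hg : DifferentiableOn ℂ g {z : ℂ | 0 < z.im})
    (hfmod : ∀ γ ∈ Γ, ∀ z : ℂ, 0 < z.im → slash k1 γ f z = f z)
    (hgmod : ∀ γ ∈ Γ, ∀ z : ℂ, 0 < z.im → slash k2 γ g z = g z) :
    ∀ γ ∈ Γ, ∀ z : ℂ, 0 < z.im →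
      slash (k1 + k2 + 2 * j) γ (RCB k1 k2 j f g) z = RCB k1 k2 j f g z := by
  obtain ⟨k1', rfl⟩ : ∃ m, k1 = m + 1 := ⟨k1 - 1, by omega⟩
  obtain ⟨k2', rfl⟩ : ∃ m, k2 = m + 1 := ⟨k2 - 1, by omega⟩
  intro γ hγ z hz
  have hdetR : γ.1 0 0 * γ.1 1 1 - γ.1 0 1 * γ.1 1 0 = 1 := by
    have h := γ.2
    rwa [Matrix.det_fin_two] at h
  have hdetC : (γ.1 0 0 : ℂ) * (γ.1 1 1 : ℂ) - (γ.1 0 1 : ℂ) * (γ.1 1 0 : ℂ) = 1 := by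
    exact_mod_cast congrArg (fun x : ℝ => (x : ℂ)) hdetR
  have hden : ∀ w : ℂ, 0 < w.im → (γ.1 1 0 : ℂ) * w + (γ.1 1 1 : ℂ) ≠ 0 :=
    fun w hw => denom_ne _ _ _ _ hdetR w hw
  have hmem : ∀ w : ℂ, 0 < w.im →
      0 < (((γ.1 0 0 : ℂ) * w + (γ.1 0 1 : ℂ)) / ((γ.1 1 0 : ℂ) * w + (γ.1 1 1 : ℂ))).im :=
    fun w hw => im_pos _ _ _ _ hdetR w hw
  have hmod1 : ∀ w : ℂ, 0 < w.im →
      f (((γ.1 0 0 : ℂ) * w + (γ.1 0 1 : ℂ)) / ((γ.1 1 0 : ℂ) * w + (γ.1 1 1 : ℂ)))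
        = ((γ.1 1 0 : ℂ) * w + (γ.1 1 1 : ℂ))^(k1'+1) * f w := by
    intro w hw
    have h := hfmod γ hγ w hw
    rw [slash, zpow_neg, zpow_natCast,
      inv_mul_eq_iff_eq_mul₀ (pow_ne_zero _ (hden w hw))] at h
    exact h
  have hmod2 : ∀ w : ℂ, 0 < w.im →
      g (((γ.1 0 0 : ℂ) * w + (γ.1 0 1 : ℂ)) / ((γ.1 1 0 : ℂ) * w + (γ.1 1 1 : ℂ)))
        = ((γ.1 1 0 : ℂ) * w + (γ.1 1 1 : ℂ))^(k2'+1) * g w := by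
    intro w hw
    have h := hgmod γ hγ w hw
    rw [slash, zpow_neg, zpow_natCast,
      inv_mul_eq_iff_eq_mul₀ (pow_ne_zero _ (hden w hw))] at h
    exact h
  have key := RCB_transform _ _ _ _ hdetC hden hmem k1' k2' j f g hf hg hmod1 hmod2 z hz
  have ecast : ((k1'+1 : ℕ) : ℤ) + ((k2'+1 : ℕ) : ℤ) + 2*(j:ℤ)
      = ((k1'+1+(k2'+1)+2*j : ℕ) : ℤ) := by push_cast; ring
  rw [slash, key, zpow_neg, ecast, zpow_natCast,
    inv_mul_cancel_left₀ (pow_ne_zero _ (hden z hz))]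
end

section
/- Let ν1, ν2 be real numbers with ν1 > 1 and ν2 > 1. If F1 ∈ H²_{ν1}(Π) and F2 ∈ H²_{ν2}(Π), then the pointwise product F1 · F2 belongs to H²_{ν1+ν2}(Π). -/
open Complex MeasureTheory
open scoped ENNReal
open Metric Real Set
open scoped Real

lemma circle_submean {f : ℂ → ℂ} {c : ℂ} {r : ℝ} (hr : 0 < r)
    (hf : DifferentiableOn ℂ f (closedBall c r)) :
    ‖f c‖ ≤ (2 * π)⁻¹ * ∫ θ in (0)..(2*π), ‖f (circleMap c r θ)‖ := by
  have hd : DiffContOnCl ℂ f (ball c r) := by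
    apply DifferentiableOn.diffContOnCl
    rwa [closure_ball c hr.ne']
  have hc : f c = (2 * π * I : ℂ)⁻¹ • ∮ z in C(c, r), (z - c)⁻¹ • f z :=
    (hd.two_pi_i_inv_smul_circleIntegral_sub_inv_smul (mem_ball_self hr)).symm
  rw [hc, norm_smul]
  have h1 : ‖(2 * π * I : ℂ)⁻¹‖ = (2 * π)⁻¹ := by simp [Real.pi_pos.le]
  rw [h1]
  apply mul_le_mul_of_nonneg_left ?_ (by positivity)
  calc ‖∮ z in C(c, r), (z - c)⁻¹ • f z‖
      ≤ ∫ θ in (0)..(2*π), ‖deriv (circleMap c r) θ •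
          (circleMap c r θ - c)⁻¹ • f (circleMap c r θ)‖ :=
        intervalIntegral.norm_integral_le_integral_norm Real.two_pi_pos.le
    _ = ∫ θ in (0)..(2*π), ‖f (circleMap c r θ)‖ := by
        congr 1; funext θ
        simp [norm_smul, circleMap_sub_center, abs_of_pos hr,
          mul_inv_cancel_left₀ hr.ne']

lemma circle_submean_sq {F : ℂ → ℂ} {c : ℂ} {r : ℝ} (hr : 0 < r)
    (hF : DifferentiableOn ℂ F (closedBall c r)) :
    2 * π * ‖F c‖ ^ 2 ≤ ∫ θ in (0)..(2*π), ‖F (circleMap c r θ)‖ ^ 2 := by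
  have h := circle_submean hr (f := fun z => F z * F z) (hF.mul hF)
  have hn : ∀ z, ‖F z * F z‖ = ‖F z‖ ^ 2 := fun z => by rw [norm_mul, sq]
  simp only [hn] at h
  calc 2 * π * ‖F c‖ ^ 2
      ≤ 2 * π * ((2 * π)⁻¹ * ∫ θ in (0)..(2*π), ‖F (circleMap c r θ)‖ ^ 2) :=
        mul_le_mul_of_nonneg_left h (by positivity)
    _ = ∫ θ in (0)..(2*π), ‖F (circleMap c r θ)‖ ^ 2 := by
        rw [← mul_assoc, mul_inv_cancel₀ Real.two_pi_pos.ne', one_mul]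

lemma circleMap_eq_polar (c : ℂ) (p : ℝ × ℝ) :
    c + Complex.polarCoord.symm p = circleMap c p.1 p.2 := by
  simp [circleMap, Complex.exp_mul_I]

lemma ball_submean_sq {F : ℂ → ℂ} {c : ℂ} {R : ℝ} (hR : 0 < R)
    (hF : DifferentiableOn ℂ F (closedBall c R)) :
    π * R ^ 2 * ‖F c‖ ^ 2 ≤ ∫ w in ball c R, ‖F w‖ ^ 2 := by
  obtain ⟨M, hM⟩ := (isCompact_closedBall c R).exists_bound_of_continuousOn hF.continuousOn
  set φ : ℝ × ℝ → ℝ := fun p => p.1 * ‖F (circleMap c p.1 p.2)‖ ^ 2 with hφ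
  set S : Set (ℝ × ℝ) := Ioo 0 R ×ˢ Ioo (-π) π with hS
  have hSmeas : MeasurableSet S := measurableSet_Ioo.prod measurableSet_Ioo
  -- step A: translate
  have stepA : ∫ w in ball c R, ‖F w‖ ^ 2 = ∫ w in ball (0:ℂ) R, ‖F (c + w)‖ ^ 2 := by
    rw [← integral_indicator measurableSet_ball, ← integral_indicator measurableSet_ball,
      ← integral_add_left_eq_self ((ball c R).indicator (fun w => ‖F w‖ ^ 2)) c]
    congr 1; funext w
    by_cases hw : w ∈ ball (0:ℂ) R
    · rw [indicator_of_mem hw, indicator_of_mem (by simpa [mem_ball, dist_eq_norm] using hw)]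
    · rw [indicator_of_notMem hw, indicator_of_notMem (by simpa [mem_ball, dist_eq_norm] using hw)]
  -- step B+C: polar coordinates
  have stepB : ∫ w in ball (0:ℂ) R, ‖F (c + w)‖ ^ 2 = ∫ p in S, φ p := by
    rw [← integral_indicator measurableSet_ball,
      ← Complex.integral_comp_polarCoord_symm ((ball (0:ℂ) R).indicator (fun w => ‖F (c + w)‖ ^ 2))]
    have hsub : S ⊆ polarCoord.target := by
      rw [hS, polarCoord_target]
      exact Set.prod_mono Ioo_subset_Ioi_self subset_rfl
    rw [show (∫ p in S, φ p) = ∫ p in polarCoord.target, S.indicator φ p by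
      rw [setIntegral_indicator hSmeas, inter_eq_self_of_subset_right hsub]]
    apply setIntegral_congr_fun polarCoord.open_target.measurableSet
    intro p hp
    rw [polarCoord_target] at hp
    by_cases hpR : p.1 < R
    · have hmem : Complex.polarCoord.symm p ∈ ball (0:ℂ) R := by
        rw [mem_ball_zero_iff, Complex.norm_polarCoord_symm,
          _root_.abs_of_pos hp.1]
        exact hpR
      have hmemS : p ∈ S := ⟨⟨hp.1, hpR⟩, hp.2⟩
      simp only [indicator_of_mem hmem, indicator_of_mem hmemS, smul_eq_mul, hφ]
      rw [circleMap_eq_polar]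
    · have hmem : Complex.polarCoord.symm p ∉ ball (0:ℂ) R := by
        rw [mem_ball_zero_iff, Complex.norm_polarCoord_symm,
          _root_.abs_of_pos hp.1]
        exact hpR
      have hmemS : p ∉ S := fun h => hpR h.1.2
      simp only [indicator_of_notMem hmem, indicator_of_notMem hmemS, smul_zero]
  -- integrability of φ on S
  have hmaps : ∀ p ∈ S, circleMap c p.1 p.2 ∈ closedBall c R := by
    intro p hp
    rw [mem_closedBall, dist_eq_norm, circleMap_sub_center]
    simp only [norm_circleMap_zero, _root_.abs_of_pos hp.1.1]
    exact hp.1.2.le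
  have hcont : ContinuousOn φ S := by
    apply ContinuousOn.mul continuousOn_fst
    have h2 : Continuous fun p : ℝ × ℝ => circleMap c p.1 p.2 := by
      simp only [circleMap]
      fun_prop
    exact ((hF.continuousOn.comp h2.continuousOn hmaps).norm.pow 2)
  have hSfin : volume S ≠ ⊤ := by
    rw [hS, Measure.volume_eq_prod, Measure.prod_prod]
    exact (ENNReal.mul_lt_top (by simp) (by simp)).ne
  have hMnonneg : 0 ≤ M := le_trans (norm_nonneg _) (hM c (mem_closedBall_self hR.le))
  have hint : IntegrableOn φ S := by
    refine ⟨(hcont.aestronglyMeasurable hSmeas), ?_⟩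
    apply HasFiniteIntegral.restrict_of_bounded (C := R * M ^ 2) hSfin.lt_top
    filter_upwards [ae_restrict_mem hSmeas] with p hp
    rw [hφ, Real.norm_eq_abs, abs_mul, _root_.abs_of_pos hp.1.1,
      _root_.abs_of_nonneg (by positivity)]
    exact mul_le_mul hp.1.2.le (pow_le_pow_left₀ (norm_nonneg _) (hM _ (hmaps p hp)) 2)
      (by positivity) hR.le
  -- Fubini
  have hint' : Integrable φ ((volume.restrict (Ioo (0:ℝ) R)).prod (volume.restrict (Ioo (-π) π))) := by
    rwa [Measure.prod_restrict, ← Measure.volume_eq_prod]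
  have stepE : ∫ p in S, φ p = ∫ r in Ioo (0:ℝ) R, ∫ θ in Ioo (-π) π, φ (r, θ) := by
    rw [hS, Measure.volume_eq_prod, setIntegral_prod _ ?_]
    rwa [← Measure.volume_eq_prod] at *
  -- inner bound
  have inner : ∀ r ∈ Ioo (0:ℝ) R, 2 * π * ‖F c‖ ^ 2 * r ≤ ∫ θ in Ioo (-π) π, φ (r, θ) := by
    intro r hr
    have hcirc := circle_submean_sq hr.1 (hF.mono (closedBall_subset_closedBall hr.2.le))
    have hper : Function.Periodic (fun θ => ‖F (circleMap c r θ)‖ ^ 2) (2*π) :=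
      (periodic_circleMap c r).comp fun z => ‖F z‖ ^ 2
    have h1 : ∫ θ in Ioo (-π) π, φ (r, θ) = r * ∫ θ in Ioo (-π) π, ‖F (circleMap c r θ)‖ ^ 2 := by
      simp only [hφ]
      exact MeasureTheory.integral_const_mul r _
    have h2 : ∫ θ in Ioo (-π) π, ‖F (circleMap c r θ)‖ ^ 2
        = ∫ θ in (0)..(2*π), ‖F (circleMap c r θ)‖ ^ 2 := by
      rw [← integral_Ioc_eq_integral_Ioo,
        ← intervalIntegral.integral_of_le (by linarith [pi_pos] : (-π) ≤ π)]
      have h3 := hper.intervalIntegral_add_eq (-π) 0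
      norm_num at h3
      rw [show (-π) + 2*π = π by ring] at h3
      exact h3
    rw [h1, h2]
    calc 2 * π * ‖F c‖ ^ 2 * r = r * (2 * π * ‖F c‖ ^ 2) := by ring
      _ ≤ r * ∫ θ in (0)..(2*π), ‖F (circleMap c r θ)‖ ^ 2 :=
          mul_le_mul_of_nonneg_left hcirc hr.1.le
  -- outer bound
  have outer1 : IntegrableOn (fun r => ∫ θ in Ioo (-π) π, φ (r, θ)) (Ioo 0 R) :=
    hint'.integral_prod_left
  have outer2 : IntegrableOn (fun r => 2 * π * ‖F c‖ ^ 2 * r) (Ioo (0:ℝ) R) := by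
    exact ((continuous_const.mul continuous_id).continuousOn.integrableOn_compact
      (isCompact_Icc (a := (0:ℝ)) (b := R))).mono_set Ioo_subset_Icc_self
  have mono := setIntegral_mono_on outer2 outer1 measurableSet_Ioo inner
  have base : ∫ r in Ioo (0:ℝ) R, 2 * π * ‖F c‖ ^ 2 * r = π * R ^ 2 * ‖F c‖ ^ 2 := by
    rw [← integral_Ioc_eq_integral_Ioo, ← intervalIntegral.integral_of_le hR.le,
      intervalIntegral.integral_const_mul, integral_id]
    ring
  rw [stepA, stepB, stepE, ← base]
  exact mono

lemma pointwise_bound (ν : ℝ) {F : ℂ → ℂ}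
    (hd : DifferentiableOn ℂ F {z : ℂ | 0 < z.im})
    (hg : IntegrableOn (fun z => ‖F z‖ ^ 2 * z.im ^ (ν - 2)) {z : ℂ | 0 < z.im}) :
    ∃ K : ℝ, 0 ≤ K ∧ ∀ z : ℂ, 0 < z.im → ‖F z‖ ^ 2 * z.im ^ ν ≤ K := by
  set g : ℂ → ℝ := fun z => ‖F z‖ ^ 2 * z.im ^ (ν - 2) with hgdef
  set A : ℝ := ∫ z in {z : ℂ | 0 < z.im}, g z with hA
  have hgnonneg : ∀ w : ℂ, 0 < w.im → 0 ≤ g w := by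
    intro w hw
    have : (0:ℝ) ≤ w.im ^ (ν - 2) := Real.rpow_nonneg hw.le _
    positivity
  have hAnonneg : 0 ≤ A := by
    apply setIntegral_nonneg (by exact measurableSet_lt measurable_const Complex.measurable_im)
    intro w hw; exact hgnonneg w hw
  set m0 : ℝ := min ((2:ℝ)⁻¹ ^ (ν - 2)) (((3:ℝ)/2) ^ (ν - 2)) with hm0
  have hm0pos : 0 < m0 := lt_min (Real.rpow_pos_of_pos (by norm_num) _)
    (Real.rpow_pos_of_pos (by norm_num) _)
  refine ⟨(4 / π) * m0⁻¹ * A, by positivity, ?_⟩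
  intro z hz
  set y : ℝ := z.im with hy
  have hy2 : 0 < y / 2 := by positivity
  -- closed ball inside the half-plane, with imaginary parts in [y/2, 3y/2]
  have him : ∀ w ∈ closedBall z (y/2), y/2 ≤ w.im ∧ w.im ≤ 3*y/2 := by
    intro w hw
    rw [mem_closedBall, dist_eq_norm] at hw
    have h1 : |(w - z).im| ≤ y/2 := le_trans (Complex.abs_im_le_norm _) hw
    rw [Complex.sub_im, abs_le] at h1
    constructor <;> [linarith [h1.1]; linarith [h1.2]]
  have hsubset : closedBall z (y/2) ⊆ {z : ℂ | 0 < z.im} := by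
    intro w hw
    have := (him w hw).1
    simp only [Set.mem_setOf_eq]; linarith
  -- submean inequality
  have hball := ball_submean_sq hy2 (hd.mono hsubset)
  -- pointwise comparison on the ball
  have hcomp : ∀ w ∈ ball z (y/2), ‖F w‖ ^ 2 ≤ (y ^ (ν - 2) * m0)⁻¹ * g w := by
    intro w hw
    have hw' := him w (ball_subset_closedBall hw)
    have hwim : 0 < w.im := lt_of_lt_of_le hy2 hw'.1
    have hb : y ^ (ν - 2) * m0 ≤ w.im ^ (ν - 2) := by
      rcases le_or_gt 0 (ν - 2) with hν | hν
      · calc y ^ (ν - 2) * m0 ≤ y ^ (ν - 2) * (2:ℝ)⁻¹ ^ (ν - 2) :=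
            mul_le_mul_of_nonneg_left (min_le_left _ _) (Real.rpow_nonneg hz.le _)
          _ = (y / 2) ^ (ν - 2) := by
            rw [← Real.mul_rpow hz.le (by norm_num)]; ring_nf
          _ ≤ w.im ^ (ν - 2) := Real.rpow_le_rpow hy2.le hw'.1 hν
      · calc y ^ (ν - 2) * m0 ≤ y ^ (ν - 2) * ((3:ℝ)/2) ^ (ν - 2) :=
            mul_le_mul_of_nonneg_left (min_le_right _ _) (Real.rpow_nonneg hz.le _)
          _ = (3*y/2) ^ (ν - 2) := by
            rw [← Real.mul_rpow hz.le (by norm_num)]; congr 1; ring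
          _ ≤ w.im ^ (ν - 2) := Real.rpow_le_rpow_of_nonpos hwim hw'.2 hν.le
    have hbpos : 0 < y ^ (ν - 2) * m0 := mul_pos (Real.rpow_pos_of_pos hz _) hm0pos
    rw [inv_mul_eq_div, le_div_iff₀ hbpos]
    calc ‖F w‖ ^ 2 * (y ^ (ν - 2) * m0) ≤ ‖F w‖ ^ 2 * w.im ^ (ν - 2) :=
          mul_le_mul_of_nonneg_left hb (by positivity)
      _ = g w := rfl
  -- integrate the comparison
  have hFcont : ContinuousOn F (closedBall z (y/2)) := hd.continuousOn.mono hsubset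
  have hint1 : IntegrableOn (fun w => ‖F w‖ ^ 2) (ball z (y/2)) :=
    ((hFcont.norm.pow 2).integrableOn_compact (isCompact_closedBall _ _)).mono_set
      ball_subset_closedBall
  have hint2 : IntegrableOn (fun w => (y ^ (ν - 2) * m0)⁻¹ * g w) (ball z (y/2)) :=
    ((hg.mono_set (ball_subset_closedBall.trans hsubset)).const_mul _)
  have hmono1 := setIntegral_mono_on hint1 hint2 measurableSet_ball hcomp
  have hmono2 : ∫ w in ball z (y/2), (y ^ (ν - 2) * m0)⁻¹ * g w
      ≤ (y ^ (ν - 2) * m0)⁻¹ * A := by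
    rw [MeasureTheory.integral_const_mul]
    apply mul_le_mul_of_nonneg_left _ (by positivity)
    apply setIntegral_mono_set hg
    · have hm : MeasurableSet {z : ℂ | 0 < z.im} :=
        measurableSet_lt measurable_const Complex.measurable_im
      filter_upwards [ae_restrict_mem hm] with w hw
      exact hgnonneg w hw
    · exact (ball_subset_closedBall.trans hsubset).eventuallyLE
  -- combine
  have h5 : π * (y/2) ^ 2 * ‖F z‖ ^ 2 ≤ (y ^ (ν - 2) * m0)⁻¹ * A :=
    le_trans hball (le_trans hmono1 hmono2)
  have hP : (0:ℝ) < y ^ (ν - 2) := Real.rpow_pos_of_pos hz _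
  have hynu : y ^ ν = y ^ (ν - 2) * y ^ 2 := by
    rw [← Real.rpow_two, ← Real.rpow_add hz]; ring_nf
  rw [show π * (y/2) ^ 2 * ‖F z‖ ^ 2 = (π * (y/2) ^ 2) * ‖F z‖ ^ 2 from rfl] at h5
  have hpy : (0:ℝ) < π * (y/2) ^ 2 := by positivity
  have h6 : ‖F z‖ ^ 2 ≤ (π * (y/2) ^ 2)⁻¹ * ((y ^ (ν - 2) * m0)⁻¹ * A) := by
    rw [inv_mul_eq_div, le_div_iff₀ hpy]; linarith
  calc ‖F z‖ ^ 2 * y ^ ν ≤ ((π * (y/2) ^ 2)⁻¹ * ((y ^ (ν - 2) * m0)⁻¹ * A)) * y ^ ν :=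
        mul_le_mul_of_nonneg_right h6 (Real.rpow_nonneg hz.le _)
    _ = (4 / π) * m0⁻¹ * A := by
        rw [hynu]
        field_simp
        ring

/-- Membership in the weighted Bergman space `H²_ν(Π)` on the upper half-plane:
`F` is holomorphic on `Π = {z : 0 < Im z}` and `∫_Π |F(z)|² (Im z)^{ν-2} dz < ∞`. -/
def MemBergman (ν : ℝ) (F : ℂ → ℂ) : Prop :=
  DifferentiableOn ℂ F {z : ℂ | 0 < z.im} ∧
    (∫⁻ z in {z : ℂ | 0 < z.im},
        ENNReal.ofReal (‖F z‖ ^ 2 * z.im ^ (ν - 2))) < ⊤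

/-- If `ν1, ν2 > 1`, `F1 ∈ H²_{ν1}(Π)` and `F2 ∈ H²_{ν2}(Π)`, then the pointwise
product `F1 ⋅ F2` belongs to `H²_{ν1+ν2}(Π)`. -/
theorem bergman_pointwise_product (ν1 ν2 : ℝ) (hν1 : 1 < ν1) (hν2 : 1 < ν2)
    (F1 F2 : ℂ → ℂ) (hF1 : MemBergman ν1 F1) (hF2 : MemBergman ν2 F2) :
    MemBergman (ν1 + ν2) (fun z => F1 z * F2 z) := by
  obtain ⟨hd1, hi1⟩ := hF1
  obtain ⟨hd2, hi2⟩ := hF2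
  have hmeas : MeasurableSet {z : ℂ | 0 < z.im} :=
    measurableSet_lt measurable_const Complex.measurable_im
  have hInt : ∀ (ν : ℝ) (F : ℂ → ℂ), DifferentiableOn ℂ F {z : ℂ | 0 < z.im} →
      (∫⁻ z in {z : ℂ | 0 < z.im}, ENNReal.ofReal (‖F z‖ ^ 2 * z.im ^ (ν - 2))) < ⊤ →
      IntegrableOn (fun z => ‖F z‖ ^ 2 * z.im ^ (ν - 2)) {z : ℂ | 0 < z.im} := by
    intro ν F hdF hiF
    have hcont : ContinuousOn (fun z : ℂ => ‖F z‖ ^ 2 * z.im ^ (ν - 2)) {z : ℂ | 0 < z.im} := by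
      apply ContinuousOn.mul ((hdF.continuousOn.norm).pow 2)
      exact ContinuousOn.rpow_const Complex.continuous_im.continuousOn
        (fun z hz => Or.inl (ne_of_gt hz))
    have hmble := hcont.aestronglyMeasurable (μ := volume) hmeas
    have hnn : 0 ≤ᵐ[volume.restrict {z : ℂ | 0 < z.im}]
        fun z : ℂ => ‖F z‖ ^ 2 * z.im ^ (ν - 2) := by
      filter_upwards [ae_restrict_mem hmeas] with w hw
      have : (0:ℝ) ≤ w.im ^ (ν - 2) := Real.rpow_nonneg hw.le _
      positivity
    exact (lintegral_ofReal_ne_top_iff_integrable hmble hnn).mp hiF.ne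
  obtain ⟨K1, hK1n, hK1⟩ := pointwise_bound ν1 hd1 (hInt ν1 F1 hd1 hi1)
  refine ⟨hd1.mul hd2, ?_⟩
  have key : ∀ z ∈ {z : ℂ | 0 < z.im},
      ENNReal.ofReal (‖F1 z * F2 z‖ ^ 2 * z.im ^ (ν1 + ν2 - 2))
        ≤ ENNReal.ofReal K1 * ENNReal.ofReal (‖F2 z‖ ^ 2 * z.im ^ (ν2 - 2)) := by
    intro z hz
    rw [← ENNReal.ofReal_mul hK1n]
    apply ENNReal.ofReal_le_ofReal
    have hz' : (0:ℝ) < z.im := hz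
    have expand : ‖F1 z * F2 z‖ ^ 2 * z.im ^ (ν1 + ν2 - 2)
        = (‖F1 z‖ ^ 2 * z.im ^ ν1) * (‖F2 z‖ ^ 2 * z.im ^ (ν2 - 2)) := by
      rw [norm_mul, show ν1 + ν2 - 2 = ν1 + (ν2 - 2) by ring, Real.rpow_add hz']
      ring
    rw [expand]
    have hnn2 : (0:ℝ) ≤ ‖F2 z‖ ^ 2 * z.im ^ (ν2 - 2) := by
      have : (0:ℝ) ≤ z.im ^ (ν2 - 2) := Real.rpow_nonneg hz'.le _
      positivity
    exact mul_le_mul_of_nonneg_right (hK1 z hz') hnn2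
  calc ∫⁻ z in {z : ℂ | 0 < z.im}, ENNReal.ofReal (‖F1 z * F2 z‖ ^ 2 * z.im ^ (ν1 + ν2 - 2))
      ≤ ∫⁻ z in {z : ℂ | 0 < z.im},
          ENNReal.ofReal K1 * ENNReal.ofReal (‖F2 z‖ ^ 2 * z.im ^ (ν2 - 2)) :=
        setLIntegral_mono' hmeas key
    _ = ENNReal.ofReal K1 * ∫⁻ z in {z : ℂ | 0 < z.im},
          ENNReal.ofReal (‖F2 z‖ ^ 2 * z.im ^ (ν2 - 2)) :=
        lintegral_const_mul' _ _ ENNReal.ofReal_ne_top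
    _ < ⊤ := ENNReal.mul_lt_top ENNReal.ofReal_lt_top hi2
end

section
/- Let ν > 1 be a real number. If f ∈ H²_ν(Π), then its complex derivative f' = df/dz belongs to H²_{ν+2}(Π). -/
open Complex MeasureTheory
open scoped ENNReal

section BergmanAux

open Metric Set
open scoped Real NNReal


lemma psymm (p : ℝ × ℝ) :
    Complex.polarCoord.symm p = p.1 * Complex.exp (p.2 * Complex.I) := by
  rw [Complex.polarCoord_symm_apply, Complex.exp_mul_I]
  rw [← Complex.ofReal_cos, ← Complex.ofReal_sin]

lemma circle_bound {f : ℂ → ℂ} {z : ℂ} {ρ : ℝ} (hρ : 0 < ρ)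
    (hf : DifferentiableOn ℂ f (closedBall z ρ)) :
    ‖deriv f z‖ * ρ ≤ (2 * Real.pi)⁻¹ * ∫ θ in (0)..(2 * Real.pi), ‖f (circleMap z ρ θ)‖ := by
  have hρ' : (0 : ℝ≥0) < ρ.toNNReal := by simpa using hρ
  have hcoe : ((ρ.toNNReal : ℝ)) = ρ := Real.coe_toNNReal _ hρ.le
  have hfd : DifferentiableOn ℂ f (closedBall z (ρ.toNNReal : ℝ)) := by rwa [hcoe]
  have hps := (hfd.hasFPowerSeriesOnBall hρ').hasFPowerSeriesAt
  have hderiv : deriv f z = (cauchyPowerSeries f z (ρ.toNNReal : ℝ)).coeff 1 := hps.deriv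
  have h1 : ‖(cauchyPowerSeries f z ρ).coeff 1‖ ≤ ‖cauchyPowerSeries f z ρ 1‖ := by
    have h := (cauchyPowerSeries f z ρ 1).le_opNorm (fun _ => (1 : ℂ))
    rw [FormalMultilinearSeries.coeff]
    refine h.trans (le_of_eq ?_)
    rw [Finset.prod_const, norm_one, one_pow, mul_one]
  have h2 := norm_cauchyPowerSeries_le f z ρ 1
  rw [hderiv, hcoe]
  have habs : |ρ| = ρ := abs_of_pos hρ
  calc ‖(cauchyPowerSeries f z ρ).coeff 1‖ * ρ ≤ ‖cauchyPowerSeries f z ρ 1‖ * ρ := by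
        exact mul_le_mul_of_nonneg_right h1 hρ.le
    _ ≤ (((2 * Real.pi)⁻¹ * ∫ θ in (0)..(2 * Real.pi), ‖f (circleMap z ρ θ)‖) * |ρ|⁻¹ ^ 1) * ρ := by
        exact mul_le_mul_of_nonneg_right h2 hρ.le
    _ = (2 * Real.pi)⁻¹ * ∫ θ in (0)..(2 * Real.pi), ‖f (circleMap z ρ θ)‖ := by
        rw [habs]; field_simp

lemma polar_ball {f : ℂ → ℂ} {z : ℂ} {r : ℝ} (hr : 0 < r)
    (hc : ContinuousOn f (closedBall z r)) :
    IntegrableOn (fun ρ : ℝ => ρ * ∫ θ in Ioo (-Real.pi) Real.pi,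
        ‖f (z + ρ * Complex.exp (θ * Complex.I))‖) (Ioo (0:ℝ) r) ∧
    ∫ w in ball z r, ‖f w‖ =
      ∫ ρ in Ioo (0:ℝ) r, ρ * ∫ θ in Ioo (-Real.pi) Real.pi,
        ‖f (z + ρ * Complex.exp (θ * Complex.I))‖ := by
  set g : ℝ × ℝ → ℝ := fun p => p.1 * ‖f (z + p.1 * Complex.exp (p.2 * Complex.I))‖ with hg
  have hφ : Continuous (fun p : ℝ × ℝ => z + ↑p.1 * Complex.exp (↑p.2 * Complex.I)) := by
    fun_prop
  have hmaps : MapsTo (fun p : ℝ × ℝ => z + ↑p.1 * Complex.exp (↑p.2 * Complex.I))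
      (Icc (0:ℝ) r ×ˢ Icc (-Real.pi) Real.pi) (closedBall z r) := by
    rintro ⟨ρ, θ⟩ ⟨hρ, -⟩
    simp only [mem_closedBall, dist_eq_norm, add_sub_cancel_left,
      norm_mul, Complex.norm_exp_ofReal_mul_I, Complex.norm_real, Real.norm_eq_abs, mul_one]
    rw [_root_.abs_of_nonneg hρ.1]
    exact hρ.2
  have hgc : ContinuousOn g (Icc (0:ℝ) r ×ˢ Icc (-Real.pi) Real.pi) := by
    apply ContinuousOn.mul continuous_fst.continuousOn
    exact ((hc.comp hφ.continuousOn hmaps).norm)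
  have hK : IsCompact (Icc (0:ℝ) r ×ˢ Icc (-Real.pi) Real.pi) :=
    isCompact_Icc.prod isCompact_Icc
  have hgint : IntegrableOn g (Ioo (0:ℝ) r ×ˢ Ioo (-Real.pi) Real.pi) := by
    exact (hgc.integrableOn_compact hK).mono_set
      (prod_mono Ioo_subset_Icc_self Ioo_subset_Icc_self)
  have hgprod : Integrable g
      ((volume.restrict (Ioo (0:ℝ) r)).prod (volume.restrict (Ioo (-Real.pi) Real.pi))) := by
    rwa [Measure.prod_restrict, ← Measure.volume_eq_prod]
  have hint : IntegrableOn (fun ρ : ℝ => ρ * ∫ θ in Ioo (-Real.pi) Real.pi,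
      ‖f (z + ρ * Complex.exp (θ * Complex.I))‖) (Ioo (0:ℝ) r) := by
    have h := hgprod.integral_prod_left
    refine h.congr (Filter.Eventually.of_forall fun ρ => ?_)
    simp only [hg]
    rw [integral_const_mul]
  refine ⟨hint, ?_⟩
  have key : ∫ w in ball z r, ‖f w‖ = ∫ p in Ioo (0:ℝ) r ×ˢ Ioo (-Real.pi) Real.pi, g p := by
    have h1 : ∫ w in ball z r, ‖f w‖ = ∫ w, (ball z r).indicator (fun w => ‖f w‖) w :=
      (integral_indicator measurableSet_ball).symm
    have h2 : ∫ w, (ball z r).indicator (fun w => ‖f w‖) w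
        = ∫ w, (ball z r).indicator (fun w => ‖f w‖) (z + w) :=
      (integral_add_left_eq_self ((ball z r).indicator fun w => ‖f w‖) z).symm
    have h3 : ∫ w, (ball z r).indicator (fun w => ‖f w‖) (z + w)
        = ∫ p in polarCoord.target,
            p.1 • (ball z r).indicator (fun w => ‖f w‖) (z + Complex.polarCoord.symm p) :=
      (Complex.integral_comp_polarCoord_symm
        (fun w => (ball z r).indicator (fun w => ‖f w‖) (z + w))).symm
    have h4 : ∫ p in polarCoord.target,
          p.1 • (ball z r).indicator (fun w => ‖f w‖) (z + Complex.polarCoord.symm p)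
        = ∫ p in polarCoord.target, ({p : ℝ × ℝ | p.1 < r}).indicator g p := by
      apply setIntegral_congr_fun (polarCoord.open_target.measurableSet)
      rintro ⟨ρ, θ⟩ hp
      dsimp only
      have hρ0 : 0 < ρ := hp.1
      have hmem : z + Complex.polarCoord.symm (ρ, θ) ∈ ball z r ↔ ρ < r := by
        rw [mem_ball, dist_eq_norm, add_sub_cancel_left,
          Complex.norm_polarCoord_symm, abs_of_pos hρ0]
      by_cases hlt : ρ < r
      · rw [indicator_of_mem (hmem.2 hlt), indicator_of_mem (by exact hlt)]
        simp only [smul_eq_mul, hg, psymm]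
      · rw [indicator_of_notMem (fun h => hlt (hmem.1 h)),
          indicator_of_notMem (by exact hlt), smul_zero]
    have h5 : ∫ p in polarCoord.target, ({p : ℝ × ℝ | p.1 < r}).indicator g p
        = ∫ p in polarCoord.target ∩ {p : ℝ × ℝ | p.1 < r}, g p := by
      rw [setIntegral_indicator (by exact measurableSet_lt measurable_fst measurable_const)]
    have hset : polarCoord.target ∩ {p : ℝ × ℝ | p.1 < r}
        = Ioo (0:ℝ) r ×ˢ Ioo (-Real.pi) Real.pi := by
      rw [polarCoord_target]
      ext ⟨ρ, θ⟩
      simp only [mem_inter_iff, mem_prod, mem_Ioi, mem_Ioo, mem_setOf_eq]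
      tauto
    rw [h1, h2, h3, h4, h5, hset]
  rw [key]
  rw [Measure.volume_eq_prod, setIntegral_prod g (by rwa [← Measure.volume_eq_prod])]
  apply setIntegral_congr_fun measurableSet_Ioo
  intro ρ hρ
  simp only [hg]
  rw [integral_const_mul]

lemma ptwise {f : ℂ → ℂ} {z : ℂ} {r : ℝ} (hr : 0 < r)
    (hf : DifferentiableOn ℂ f (closedBall z r)) :
    ‖deriv f z‖ ^ 2 * (4 * Real.pi / 9 * r ^ 4) ≤ ∫ w in ball z r, ‖f w‖ ^ 2 := by
  have hc : ContinuousOn f (closedBall z r) := hf.continuousOn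
  obtain ⟨hint, hpolar⟩ := polar_ball hr hc
  -- Step A': pointwise bound for ρ ∈ Ioo 0 r
  have stepA : ∀ ρ ∈ Ioo (0:ℝ) r, ‖deriv f z‖ * ρ ^ 2 ≤
      (2 * Real.pi)⁻¹ * (ρ * ∫ θ in Ioo (-Real.pi) Real.pi,
        ‖f (z + ρ * Complex.exp (θ * Complex.I))‖) := by
    intro ρ hρ
    have hfd : DifferentiableOn ℂ f (closedBall z ρ) :=
      hf.mono (closedBall_subset_closedBall hρ.2.le)
    have h1 := circle_bound hρ.1 hfd
    have hper : Function.Periodic (fun θ => ‖f (circleMap z ρ θ)‖) (2 * Real.pi) :=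
      (periodic_circleMap z ρ).comp fun w => ‖f w‖
    have h2 : ∫ θ in (0)..(2 * Real.pi), ‖f (circleMap z ρ θ)‖
        = ∫ θ in Ioo (-Real.pi) Real.pi, ‖f (z + ρ * Complex.exp (θ * Complex.I))‖ := by
      have := hper.intervalIntegral_add_eq 0 (-Real.pi)
      rw [zero_add] at this
      rw [this, intervalIntegral.integral_of_le (by linarith [Real.pi_pos]),
        integral_Ioc_eq_integral_Ioo]
      have : -Real.pi + 2 * Real.pi = Real.pi := by ring
      rw [this]
      apply setIntegral_congr_fun measurableSet_Ioo
      intro θ _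
      simp [circleMap]
    rw [h2] at h1
    calc ‖deriv f z‖ * ρ ^ 2 = (‖deriv f z‖ * ρ) * ρ := by ring
      _ ≤ ((2 * Real.pi)⁻¹ * ∫ θ in Ioo (-Real.pi) Real.pi,
            ‖f (z + ρ * Complex.exp (θ * Complex.I))‖) * ρ :=
          mul_le_mul_of_nonneg_right h1 hρ.1.le
      _ = (2 * Real.pi)⁻¹ * (ρ * ∫ θ in Ioo (-Real.pi) Real.pi,
            ‖f (z + ρ * Complex.exp (θ * Complex.I))‖) := by ring
  -- integrate over ρ
  have hlhs : ∫ ρ in Ioo (0:ℝ) r, ‖deriv f z‖ * ρ ^ 2 = ‖deriv f z‖ * (r ^ 3 / 3) := by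
    rw [integral_const_mul, ← integral_Ioc_eq_integral_Ioo,
      ← intervalIntegral.integral_of_le hr.le, integral_pow]
    norm_num
  have hmono : ∫ ρ in Ioo (0:ℝ) r, ‖deriv f z‖ * ρ ^ 2 ≤
      ∫ ρ in Ioo (0:ℝ) r, (2 * Real.pi)⁻¹ * (ρ * ∫ θ in Ioo (-Real.pi) Real.pi,
        ‖f (z + ρ * Complex.exp (θ * Complex.I))‖) := by
    apply setIntegral_mono_on
    · exact Integrable.const_mul (f := fun ρ : ℝ => ρ ^ 2) (μ := volume.restrict (Ioo (0:ℝ) r))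
        (((continuous_pow 2).continuousOn.integrableOn_compact isCompact_Icc).mono_set
          Ioo_subset_Icc_self) _
    · exact hint.const_mul _
    · exact measurableSet_Ioo
    · exact stepA
  have hub : ‖deriv f z‖ * (r ^ 3 / 3) ≤ (2 * Real.pi)⁻¹ * ∫ w in ball z r, ‖f w‖ := by
    rw [← hlhs]
    refine hmono.trans (le_of_eq ?_)
    rw [integral_const_mul, ← hpolar]
  -- Cauchy-Schwarz on the ball
  haveI : IsFiniteMeasure (volume.restrict (ball z r)) :=
    ⟨by rw [Measure.restrict_apply_univ]; exact measure_ball_lt_top⟩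
  have hpq : Real.HolderConjugate 2 2 := Real.HolderConjugate.two_two
  have hmeas : AEStronglyMeasurable (fun w => ‖f w‖) (volume.restrict (ball z r)) :=
    ((hc.norm).mono ball_subset_closedBall).aestronglyMeasurable measurableSet_ball
  have hsq : Integrable (fun w => ‖f w‖ ^ 2) (volume.restrict (ball z r)) := by
    have : ContinuousOn (fun w => ‖f w‖ ^ 2) (closedBall z r) := (hc.norm).pow 2
    exact (this.integrableOn_compact (isCompact_closedBall z r)).mono_set
      ball_subset_closedBall
  have hf2 : MemLp (fun w => ‖f w‖) (ENNReal.ofReal 2) (volume.restrict (ball z r)) := by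
    rw [show ENNReal.ofReal (2:ℝ) = 2 by norm_num]
    exact (memLp_two_iff_integrable_sq hmeas).2 hsq
  have hg2 : MemLp (fun _ : ℂ => (1:ℝ)) (ENNReal.ofReal 2) (volume.restrict (ball z r)) :=
    memLp_const 1
  have hCS := MeasureTheory.integral_mul_le_Lp_mul_Lq_of_nonneg hpq
    (Filter.Eventually.of_forall fun w => norm_nonneg (f w))
    (Filter.Eventually.of_forall fun _ => zero_le_one) hf2 hg2
  simp only [mul_one, Real.one_rpow] at hCS
  -- identify the pieces
  set I : ℝ := ∫ w in ball z r, ‖f w‖ ^ 2 with hIdef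
  have hI : 0 ≤ I := setIntegral_nonneg measurableSet_ball fun w _ => by positivity
  have hrpow2 : ∀ x : ℝ, 0 ≤ x → x ^ (2:ℝ) = x ^ 2 := fun x hx => by
    rw [show (2:ℝ) = ((2:ℕ):ℝ) by norm_num, Real.rpow_natCast]
  have hpow_int : (∫ w in ball z r, ‖f w‖ ^ (2:ℝ)) = I := by
    rw [hIdef]
    exact setIntegral_congr_fun measurableSet_ball fun w _ => hrpow2 _ (norm_nonneg _)
  have hVconst : (∫ _ in ball z r, (1:ℝ)) = Real.pi * r ^ 2 := by
    rw [setIntegral_const, smul_eq_mul, mul_one, Measure.real, Complex.volume_ball,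
      ENNReal.toReal_mul, ENNReal.toReal_pow, ENNReal.toReal_ofReal hr.le]
    simp [NNReal.coe_real_pi]
    ring
  rw [hpow_int, hVconst] at hCS
  set s : ℝ := I ^ ((1:ℝ)/2) with hs
  set t : ℝ := (Real.pi * r ^ 2) ^ ((1:ℝ)/2) with ht
  have hs0 : 0 ≤ s := Real.rpow_nonneg hI _
  have ht0 : 0 ≤ t := Real.rpow_nonneg (by positivity) _
  have hs2 : s ^ 2 = I := by
    rw [hs, ← Real.rpow_natCast (I ^ ((1:ℝ)/2)) 2, ← Real.rpow_mul hI]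
    norm_num
  have ht2 : t ^ 2 = Real.pi * r ^ 2 := by
    rw [ht, ← Real.rpow_natCast ((Real.pi * r ^ 2) ^ ((1:ℝ)/2)) 2,
      ← Real.rpow_mul (by positivity)]
    norm_num
  have hchain : ‖deriv f z‖ * (r ^ 3 / 3) ≤ (2 * Real.pi)⁻¹ * (s * t) :=
    hub.trans (mul_le_mul_of_nonneg_left hCS (by positivity))
  have h2pi : (0:ℝ) < 2 * Real.pi := by positivity
  have h3 : 2 * Real.pi * (‖deriv f z‖ * r ^ 3) ≤ 3 * (s * t) := by
    rw [inv_mul_eq_div, le_div_iff₀ h2pi] at hchain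
    linarith [hchain]
  have h4 : (2 * Real.pi * (‖deriv f z‖ * r ^ 3)) ^ 2 ≤ (3 * (s * t)) ^ 2 :=
    pow_le_pow_left₀ (by positivity) h3 2
  rw [← mul_le_mul_iff_of_pos_right (show (0:ℝ) < 9 * Real.pi * r ^ 2 by positivity)]
  calc ‖deriv f z‖ ^ 2 * (4 * Real.pi / 9 * r ^ 4) * (9 * Real.pi * r ^ 2)
      = (2 * Real.pi * (‖deriv f z‖ * r ^ 3)) ^ 2 := by ring
    _ ≤ (3 * (s * t)) ^ 2 := h4
    _ = I * (9 * Real.pi * r ^ 2) := by rw [mul_pow, mul_pow, hs2, ht2]; ring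

end BergmanAux

section BergmanMain

open Metric Set
open scoped Real NNReal

/-- For `ν > 1`, if `f ∈ H²_ν(Π)` then its complex derivative `f'` belongs to `H²_{ν+2}(Π)`. -/
theorem bergman_deriv (ν : ℝ) (hν : 1 < ν) (f : ℂ → ℂ) (hf : MemBergman ν f) :
    MemBergman (ν + 2) (deriv f) := by
  obtain ⟨hd, hI⟩ := hf
  set U : Set ℂ := {z : ℂ | 0 < z.im} with hUdef
  have hUo : IsOpen U := isOpen_lt continuous_const Complex.continuous_im
  have hUm : MeasurableSet U := hUo.measurableSet
  have hdd : DifferentiableOn ℂ (deriv f) U :=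
    ((hd.analyticOnNhd hUo).deriv).differentiableOn
  refine ⟨hdd, ?_⟩
  -- ball inclusion
  have hsub : ∀ z ∈ U, closedBall z (z.im / 2) ⊆ U := by
    intro z hz w hw
    have h1 : |(w - z).im| ≤ ‖w - z‖ := Complex.abs_im_le_norm _
    rw [mem_closedBall, Complex.dist_eq] at hw
    have hz' : 0 < z.im := hz
    have : |w.im - z.im| ≤ z.im / 2 := by
      rw [← Complex.sub_im]; exact h1.trans hw
    have := abs_le.1 this
    show 0 < w.im
    linarith [this.1]
  -- the data function
  set G : ℂ → ℝ≥0∞ := U.indicator fun w => ENNReal.ofReal (‖f w‖ ^ 2) with hGdef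
  have hcont : ContinuousOn (fun w => ‖f w‖ ^ 2) U :=
    (hd.continuousOn.norm).pow 2
  have hGm : AEMeasurable G volume :=
    (aemeasurable_indicator_iff hUm).2
      (ENNReal.measurable_ofReal.comp_aemeasurable (hcont.aemeasurable hUm))
  -- constants
  set c0 : ℝ := max ((2:ℝ) ^ (ν - 4)) ((2/3 : ℝ) ^ (ν - 4)) with hc0def
  have hc0 : 0 < c0 := lt_max_of_lt_left (Real.rpow_pos_of_pos two_pos _)
  -- kernel
  set D : Set (ℂ × ℂ) := {p : ℂ × ℂ | dist p.2 p.1 < p.1.im / 2} with hDdef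
  have hDm : MeasurableSet D :=
    (isOpen_lt (continuous_snd.dist continuous_fst)
      ((Complex.continuous_im.comp continuous_fst).div_const 2)).measurableSet
  set cfun : ℂ → ℝ≥0∞ := fun z => ENNReal.ofReal (36 / Real.pi * z.im ^ (ν - 4)) with hcfdef
  have hcfm : Measurable cfun :=
    ENNReal.measurable_ofReal.comp ((Complex.measurable_im.pow measurable_const).const_mul _)
  set K : ℂ × ℂ → ℝ≥0∞ :=
    fun p => U.indicator cfun p.1 * D.indicator 1 p * G p.2 with hKdef
  have hKm : AEMeasurable K (volume.prod volume) := by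
    refine AEMeasurable.mul ?_ (hGm.comp_quasiMeasurePreserving
      Measure.quasiMeasurePreserving_snd)
    exact (((hcfm.indicator hUm).comp measurable_fst).mul
      (measurable_one.indicator hDm)).aemeasurable
  -- pointswise bound
  have hpt : ∀ z ∈ U, ENNReal.ofReal (‖deriv f z‖ ^ 2 * z.im ^ (ν + 2 - 2)) ≤
      ∫⁻ w, K (z, w) := by
    intro z hz
    have hy : 0 < z.im := hz
    have hr : 0 < z.im / 2 := by linarith
    have hfd : DifferentiableOn ℂ f (closedBall z (z.im / 2)) := hd.mono (hsub z hz)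
    have hpt1 := ptwise hr hfd
    have hysplit : z.im ^ (ν + 2 - 2) = z.im ^ (ν - 4) * z.im ^ (4:ℕ) := by
      rw [show ν + 2 - 2 = (ν - 4) + ((4:ℕ):ℝ) by push_cast; ring,
        Real.rpow_add hy, Real.rpow_natCast]
    have hreal : ‖deriv f z‖ ^ 2 * z.im ^ (ν + 2 - 2) ≤
        (36 / Real.pi * z.im ^ (ν - 4)) * ∫ w in ball z (z.im / 2), ‖f w‖ ^ 2 := by
      rw [hysplit]
      calc ‖deriv f z‖ ^ 2 * (z.im ^ (ν - 4) * z.im ^ (4:ℕ))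
          = (36 / Real.pi * z.im ^ (ν - 4)) *
            (‖deriv f z‖ ^ 2 * (4 * Real.pi / 9 * (z.im / 2) ^ 4)) := by
            field_simp
            ring
        _ ≤ _ := mul_le_mul_of_nonneg_left hpt1 (by positivity)
    have hsqint : IntegrableOn (fun w => ‖f w‖ ^ 2) (ball z (z.im / 2)) :=
      ((hfd.continuousOn.norm.pow 2).integrableOn_compact
        (isCompact_closedBall z (z.im / 2))).mono_set ball_subset_closedBall
    calc ENNReal.ofReal (‖deriv f z‖ ^ 2 * z.im ^ (ν + 2 - 2))
        ≤ ENNReal.ofReal ((36 / Real.pi * z.im ^ (ν - 4)) *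
            ∫ w in ball z (z.im / 2), ‖f w‖ ^ 2) := ENNReal.ofReal_le_ofReal hreal
      _ = cfun z * ENNReal.ofReal (∫ w in ball z (z.im / 2), ‖f w‖ ^ 2) := by
          rw [ENNReal.ofReal_mul (by positivity)]
      _ = cfun z * ∫⁻ w in ball z (z.im / 2), ENNReal.ofReal (‖f w‖ ^ 2) := by
          rw [ofReal_integral_eq_lintegral_ofReal hsqint
            (Filter.Eventually.of_forall fun w => by positivity)]
      _ = ∫⁻ w, K (z, w) := by
          rw [← lintegral_indicator measurableSet_ball,
            ← lintegral_const_mul' _ _ ENNReal.ofReal_ne_top]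
          apply lintegral_congr
          intro w
          by_cases hwb : w ∈ ball z (z.im / 2)
          · have hwD : (z, w) ∈ D := by
              rw [hDdef, mem_setOf_eq]
              exact mem_ball.1 hwb
            have hwU : w ∈ U := hsub z hz (ball_subset_closedBall hwb)
            rw [hKdef]
            simp only [indicator_of_mem hwb, indicator_of_mem hwD, indicator_of_mem hz,
              indicator_of_mem hwU, hGdef, hcfdef, Pi.one_apply, mul_one]
          · have hwD : (z, w) ∉ D := fun h => hwb (mem_ball.2 h)
            rw [hKdef]
            simp only [indicator_of_notMem hwb, indicator_of_notMem hwD, mul_zero,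
              zero_mul, mul_zero]
  -- inner bound after swapping
  have hofRealpi : (NNReal.pi : ℝ≥0∞) = ENNReal.ofReal Real.pi := by
    rw [← NNReal.coe_real_pi, ENNReal.ofReal_coe_nnreal]
  have hinner : ∀ w, (∫⁻ z, K (z, w)) ≤ ENNReal.ofReal (36 * c0) *
      U.indicator (fun w => ENNReal.ofReal (‖f w‖ ^ 2 * w.im ^ (ν - 2))) w := by
    intro w
    by_cases hw : w ∈ U
    · have hb : 0 < w.im := hw
      have hKb : ∀ z, K (z, w) ≤
          (ENNReal.ofReal (36 / Real.pi * (c0 * w.im ^ (ν - 4))) *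
            (ball w w.im).indicator 1 z) * G w := by
        intro z
        by_cases hzUD : z ∈ U ∧ (z, w) ∈ D
        · obtain ⟨hzU, hzD⟩ := hzUD
          have hzy : 0 < z.im := hzU
          have hdist : dist w z < z.im / 2 := hzD
          have him : |w.im - z.im| ≤ dist w z := by
            rw [Complex.dist_eq, ← Complex.sub_im]
            exact Complex.abs_im_le_norm _
          have hstrict := abs_lt.1 (him.trans_lt hdist)
          have h1 : z.im < 2 * w.im := by linarith [hstrict.1]
          have h2 : 2 / 3 * w.im < z.im := by linarith [hstrict.2]
          have hz2 : z.im ^ (ν - 4) ≤ c0 * w.im ^ (ν - 4) := by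
            rcases le_or_gt 0 (ν - 4) with h | h
            · calc z.im ^ (ν - 4) ≤ (2 * w.im) ^ (ν - 4) :=
                  Real.rpow_le_rpow hzy.le h1.le h
                _ = 2 ^ (ν - 4) * w.im ^ (ν - 4) := Real.mul_rpow (by norm_num) hb.le
                _ ≤ c0 * w.im ^ (ν - 4) := mul_le_mul_of_nonneg_right
                    (le_max_left _ _) (by positivity)
            · calc z.im ^ (ν - 4) ≤ (2 / 3 * w.im) ^ (ν - 4) :=
                  Real.rpow_le_rpow_of_nonpos (by positivity) h2.le h.le
                _ = (2/3) ^ (ν - 4) * w.im ^ (ν - 4) := Real.mul_rpow (by norm_num) hb.le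
                _ ≤ c0 * w.im ^ (ν - 4) := mul_le_mul_of_nonneg_right
                    (le_max_right _ _) (by positivity)
          have hzball : z ∈ ball w w.im := by
            rw [mem_ball, dist_comm]
            calc dist w z < z.im / 2 := hdist
              _ < w.im := by linarith
          rw [hKdef]
          simp only [indicator_of_mem hzU, indicator_of_mem hzD, indicator_of_mem hzball,
            Pi.one_apply, mul_one]
          refine mul_le_mul_left ?_ _
          rw [hcfdef]
          exact ENNReal.ofReal_le_ofReal
            (mul_le_mul_of_nonneg_left hz2 (by positivity))
        · have hzero : K (z, w) = 0 := by
            rw [hKdef]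
            rcases not_and_or.1 hzUD with h | h
            · simp [indicator_of_notMem h]
            · simp [indicator_of_notMem h]
          rw [hzero]
          exact zero_le
      calc (∫⁻ z, K (z, w))
          ≤ ∫⁻ z, (ENNReal.ofReal (36 / Real.pi * (c0 * w.im ^ (ν - 4))) *
              (ball w w.im).indicator 1 z) * G w := lintegral_mono hKb
        _ = (∫⁻ z, ENNReal.ofReal (36 / Real.pi * (c0 * w.im ^ (ν - 4))) *
              (ball w w.im).indicator 1 z) * G w :=
            lintegral_mul_const _ ((measurable_one.indicator measurableSet_ball).const_mul _)
        _ = ENNReal.ofReal (36 / Real.pi * (c0 * w.im ^ (ν - 4))) *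
              volume (ball w w.im) * G w := by
            rw [lintegral_const_mul _ (measurable_one.indicator measurableSet_ball),
              lintegral_indicator_one measurableSet_ball]
        _ ≤ ENNReal.ofReal (36 * c0) *
            U.indicator (fun w => ENNReal.ofReal (‖f w‖ ^ 2 * w.im ^ (ν - 2))) w := by
            have ha : (0:ℝ) ≤ 36 / Real.pi * (c0 * w.im ^ (ν - 4)) :=
              mul_nonneg (div_nonneg (by norm_num) Real.pi_pos.le)
                (mul_nonneg hc0.le (Real.rpow_nonneg hb.le _))
            have hG : G w = ENNReal.ofReal (‖f w‖ ^ 2) := by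
              rw [hGdef, indicator_of_mem hw]
            have hL : ENNReal.ofReal (36 / Real.pi * (c0 * w.im ^ (ν - 4))) *
                volume (ball w w.im) * G w
                = ENNReal.ofReal ((36 / Real.pi * (c0 * w.im ^ (ν - 4))) *
                    (w.im ^ 2 * Real.pi) * ‖f w‖ ^ 2) := by
              rw [Complex.volume_ball, hofRealpi, hG, ← ENNReal.ofReal_pow hb.le,
                ← ENNReal.ofReal_mul (by positivity : (0:ℝ) ≤ w.im ^ 2),
                ← ENNReal.ofReal_mul ha,
                ← ENNReal.ofReal_mul (mul_nonneg ha (by positivity))]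
            rw [hL, indicator_of_mem hw,
              ← ENNReal.ofReal_mul (mul_nonneg (by norm_num : (0:ℝ) ≤ 36) hc0.le)]
            apply ENNReal.ofReal_le_ofReal
            have hsplit : w.im ^ (ν - 2) = w.im ^ (ν - 4) * w.im ^ (2:ℕ) := by
              rw [show ν - 2 = (ν - 4) + ((2:ℕ):ℝ) by push_cast; ring,
                Real.rpow_add hb, Real.rpow_natCast]
            rw [hsplit]
            have hpi : Real.pi ≠ 0 := Real.pi_ne_zero
            apply le_of_eq
            field_simp
    · -- w ∉ U : G w = 0 so everything vanishes
      have : ∀ z, K (z, w) = 0 := by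
        intro z
        rw [hKdef]
        simp [hGdef, indicator_of_notMem hw]
      simp [this]
  -- final assembly
  calc ∫⁻ z in U, ENNReal.ofReal (‖deriv f z‖ ^ 2 * z.im ^ (ν + 2 - 2))
      ≤ ∫⁻ z in U, ∫⁻ w, K (z, w) := setLIntegral_mono' hUm hpt
    _ ≤ ∫⁻ z, ∫⁻ w, K (z, w) := setLIntegral_le_lintegral _ _
    _ = ∫⁻ w, ∫⁻ z, K (z, w) := by
        apply lintegral_lintegral_swap
        exact hKm
    _ ≤ ∫⁻ w, ENNReal.ofReal (36 * c0) *
          U.indicator (fun w => ENNReal.ofReal (‖f w‖ ^ 2 * w.im ^ (ν - 2))) w :=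
        lintegral_mono hinner
    _ = ENNReal.ofReal (36 * c0) *
          ∫⁻ w in U, ENNReal.ofReal (‖f w‖ ^ 2 * w.im ^ (ν - 2)) := by
        rw [lintegral_const_mul' _ _ ENNReal.ofReal_ne_top, lintegral_indicator hUm]
    _ < ⊤ := ENNReal.mul_lt_top ENNReal.ofReal_lt_top hI

end BergmanMain
end
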